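/- arXiv:2502.19141 — 4 statements merged into one kernel-verified Lean document; each statement's English description precedes it below -/
import Mathlib

section
/- Let A, B ∈ F_q[X] be additive polynomials with A nonzero. Then A(X) divides B(X) in F_q[X] if and only if there exists an additive polynomial C ∈ F_q[X] such that B(X) = C(A(X)). -/
open Polynomial Filter

/-- A polynomial over a field of characteristic `p` is additive iff every
monomial with nonzero coefficient has exponent a power of `p`
(equivalently, `A(X) = ∑ aᵢ X^(pⁱ)`). -/
def IsAdditivePoly {F : Type*} [Field F] (p : ℕ) (A : Polynomial F) : Prop :=
  ∀ i : ℕ, A.coeff i ≠ 0 → ∃ h : ℕ, i = p ^ h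

/-- `polyIter P n` is the `n`-fold composition `P^{(n)}` of `P` with itself,
with the convention `P^{(0)} = X`. -/
noncomputable def polyIter {F : Type*} [Field F] (P : Polynomial F) (n : ℕ) : Polynomial F :=
  (fun Q => P.comp Q)^[n] Polynomial.X

/-- `SplitsIn P j` : `P` splits completely over `F_{q^j}`, i.e. every root of
`P` in an algebraic closure of `F` lies in the subfield with `q^j` elements,
where `q = #F`. -/
def SplitsIn {F : Type*} [Field F] [Fintype F] (P : Polynomial F) (j : ℕ) : Prop :=
  ∀ y : AlgebraicClosure F, Polynomial.aeval y P = 0 → y ^ Fintype.card F ^ j = y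

/-- `sDeg P n` : the degree over `F_q` of the splitting field of the `n`-th
iterate `P^{(n)}`, i.e. the least positive `j` such that `P^{(n)}` splits
completely in `F_{q^j}`. -/
noncomputable def sDeg {F : Type*} [Field F] [Fintype F] (P : Polynomial F) (n : ℕ) : ℕ :=
  sInf {j : ℕ | 0 < j ∧ SplitsIn (polyIter P n) j}

set_option linter.unusedSectionVars false

section Aux

variable {F : Type*} [Field F] {p : ℕ} [Fact p.Prime] [CharP F p]

lemma isAdd_zero : IsAdditivePoly p (0 : Polynomial F) := by
  intro i hi; simp at hi

lemma isAdd_coeff_zero {A : Polynomial F} (hA : IsAdditivePoly p A) : A.coeff 0 = 0 := by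
  by_contra h
  obtain ⟨k, hk⟩ := hA 0 h
  exact (pow_ne_zero k (Fact.out : p.Prime).ne_zero) hk.symm

lemma isAdd_smul_X_pow (c : F) (k : ℕ) : IsAdditivePoly p (c • X ^ p ^ k : Polynomial F) := by
  intro i hi
  rw [smul_eq_C_mul, coeff_C_mul, coeff_X_pow] at hi
  by_cases h : i = p ^ k
  · exact ⟨k, h⟩
  · simp [h] at hi

lemma isAdd_add {A B : Polynomial F} (hA : IsAdditivePoly p A) (hB : IsAdditivePoly p B) :
    IsAdditivePoly p (A + B) := by
  intro i hi
  rw [coeff_add] at hi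
  by_cases h : A.coeff i ≠ 0
  · exact hA i h
  · push_neg at h
    exact hB i (by intro h2; rw [h, h2, add_zero] at hi; exact hi rfl)

lemma isAdd_sub {A B : Polynomial F} (hA : IsAdditivePoly p A) (hB : IsAdditivePoly p B) :
    IsAdditivePoly p (A - B) := by
  intro i hi
  rw [coeff_sub] at hi
  by_cases h : A.coeff i ≠ 0
  · exact hA i h
  · push_neg at h
    refine hB i fun h2 => hi (by rw [h, h2, sub_zero])

lemma isAdd_pow_p {A : Polynomial F} (hA : IsAdditivePoly p A) : IsAdditivePoly p (A ^ p) := by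
  have hp : 0 < p := (Fact.out : p.Prime).pos
  intro i hi
  rw [← Polynomial.map_frobenius_expand (p := p) A, Polynomial.coeff_map, Polynomial.coeff_expand hp] at hi
  by_cases h : p ∣ i
  · simp only [h, if_true] at hi
    have : A.coeff (i / p) ≠ 0 := fun h2 => hi (by rw [h2]; simp)
    obtain ⟨k, hk⟩ := hA _ this
    exact ⟨k + 1, by rw [← Nat.div_mul_cancel h, hk, pow_succ]⟩
  · simp [h] at hi

lemma isAdd_pow {A : Polynomial F} (hA : IsAdditivePoly p A) (k : ℕ) :
    IsAdditivePoly p (A ^ p ^ k) := by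
  induction k with
  | zero => simpa using hA
  | succ n ih => rw [pow_succ, pow_mul]; exact isAdd_pow_p ih

lemma isAdd_dvd_comp {A C : Polynomial F} (hC : IsAdditivePoly p C) : A ∣ C.comp A := by
  obtain ⟨D, hD⟩ := Polynomial.X_dvd_iff.2 (isAdd_coeff_zero hC)
  exact ⟨D.comp A, by rw [hD, mul_comp, X_comp]⟩

end Aux

theorem additive_dvd_iff_comp (p : ℕ) [Fact p.Prime] (F : Type*) [Field F] [Fintype F]
    [CharP F p] (A B : Polynomial F) (hA : IsAdditivePoly p A) (hB : IsAdditivePoly p B)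
    (hA0 : A ≠ 0) :
    A ∣ B ↔ ∃ C : Polynomial F, IsAdditivePoly p C ∧ B = C.comp A := by
  constructor
  · -- hard direction
    have hp1 : 1 < p := (Fact.out : p.Prime).one_lt
    obtain ⟨m, hm⟩ := hA A.natDegree (leadingCoeff_ne_zero.2 hA0)
    suffices H : ∀ N : ℕ, ∀ B : Polynomial F, B.natDegree ≤ N → IsAdditivePoly p B →
        A ∣ B → ∃ C : Polynomial F, IsAdditivePoly p C ∧ B = C.comp A by
      exact fun hdvd => H B.natDegree B le_rfl hB hdvd
    intro N
    induction N with
    | zero =>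
      intro B hBdeg hB hdvd
      have hB0 : B = 0 := by
        have := Polynomial.eq_C_of_natDegree_eq_zero (Nat.le_zero.1 hBdeg)
        rw [this, isAdd_coeff_zero hB, map_zero]
      exact ⟨0, isAdd_zero, by simp [hB0]⟩
    | succ N ih =>
      intro B hBdeg hB hdvd
      by_cases hB0 : B = 0
      · exact ⟨0, isAdd_zero, by simp [hB0]⟩
      obtain ⟨n, hn⟩ := hB B.natDegree (leadingCoeff_ne_zero.2 hB0)
      have hmn : m ≤ n := by
        have := Polynomial.natDegree_le_of_dvd hdvd hB0
        rw [hm, hn] at this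
        exact (Nat.pow_le_pow_iff_right hp1).1 this
      set k : ℕ := p ^ (n - m) with hk
      set c : F := B.leadingCoeff / A.leadingCoeff ^ k with hc
      have hc0 : c ≠ 0 := div_ne_zero (leadingCoeff_ne_zero.2 hB0)
        (pow_ne_zero _ (leadingCoeff_ne_zero.2 hA0))
      set Q : Polynomial F := c • A ^ k with hQ
      have hQ0 : Q ≠ 0 := smul_ne_zero hc0 (pow_ne_zero _ hA0)
      have hQdeg : Q.natDegree = B.natDegree := by
        rw [hQ, smul_eq_C_mul, natDegree_C_mul hc0, natDegree_pow, hm, hn, hk,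
          ← pow_add, Nat.sub_add_cancel hmn]
      have hQlc : Q.leadingCoeff = B.leadingCoeff := by
        rw [hQ, smul_eq_C_mul, leadingCoeff_mul, leadingCoeff_C, leadingCoeff_pow, hc]
        exact div_mul_cancel₀ _ (pow_ne_zero _ (leadingCoeff_ne_zero.2 hA0))
      have hdeglt : (B - Q).degree < B.degree := by
        apply Polynomial.degree_sub_lt _ hB0 hQlc.symm
        rw [degree_eq_natDegree hB0, degree_eq_natDegree hQ0, hQdeg]
      have hQcomp : Q = (c • X ^ k).comp A := by
        rw [smul_comp, X_pow_comp]
      have hQadd : IsAdditivePoly p Q := by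
        intro i hi
        rw [hQ, smul_eq_C_mul, coeff_C_mul] at hi
        exact isAdd_pow hA (n - m) i (fun h => hi (by rw [h, mul_zero]))
      have hB'add : IsAdditivePoly p (B - Q) := isAdd_sub hB hQadd
      have hB'dvd : A ∣ B - Q := by
        refine dvd_sub hdvd ?_
        rw [hQcomp]
        exact isAdd_dvd_comp (isAdd_smul_X_pow c (n - m))
      have hB'deg : (B - Q).natDegree ≤ N := by
        by_cases h0 : B - Q = 0
        · simp [h0]
        · have := Polynomial.natDegree_lt_natDegree h0 hdeglt
          omega
      obtain ⟨C', hC', hBC'⟩ := ih (B - Q) hB'deg hB'add hB'dvd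
      refine ⟨C' + c • X ^ k, isAdd_add hC' (by rw [hk]; exact isAdd_smul_X_pow c (n - m)), ?_⟩
      rw [add_comp, ← hBC', ← hQcomp, sub_add_cancel]
  · rintro ⟨C, hC, rfl⟩
    exact isAdd_dvd_comp hC
end

section
/- Let A, C ∈ F_q[X] be additive polynomials and suppose B(X) := C(A(X)) has the form B(X) = ∑_{i=0}^s a_i X^{q^i} with all coefficients a_i lying in the prime field F_p. Then (i) A(C(X)) = C(A(X)) as polynomials, and (ii) if moreover A(X) = A_0^{(k)}(X) for some integer k ≥ 1 and some additive polynomial A_0 ∈ F_q[X], then A_0(C(X)) = C(A_0(X)). -/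
open Polynomial Filter

/-- If every coefficient of `f` is fixed by `x ↦ x^(p^u)`, then
`f ^ (p^u) = expand (p^u) f`. -/
lemma pow_eq_expand {p : ℕ} [Fact p.Prime] {F : Type*} [Field F] [CharP F p]
    (f : Polynomial F) (u : ℕ) (hf : ∀ d, (f.coeff d) ^ (p ^ u) = f.coeff d) :
    f ^ (p ^ u) = expand F (p ^ u) f := by
  have h1 : f.map ((frobenius F p) ^ u) = f := by
    ext d
    rw [coeff_map, RingHom.coe_pow, iterate_frobenius]
    exact hf d
  have h2 : f.map (iterateFrobenius F p u) = f := by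
    ext d
    rw [coeff_map, iterateFrobenius_def]
    exact hf d
  rw [← Polynomial.map_iterateFrobenius_expand p f u, Polynomial.map_expand, h2]

lemma fix_pow {F : Type*} [Field F] {c : F} {n : ℕ} (h : c ^ n = c) (i : ℕ) :
    c ^ (n ^ i) = c := by
  induction i with
  | zero => simp
  | succ i ih => rw [pow_succ, pow_mul, ih, h]

/-- Key commutation lemma. -/
lemma comp_comm_of_expand {F : Type*} [Field F] (A B : Polynomial F)
    (h1 : ∀ e ∈ A.support, B ^ e = expand F e B)
    (h2 : ∀ d ∈ B.support, A ^ d = expand F d A) :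
    A.comp B = B.comp A := by
  rw [comp_eq_sum_left, comp_eq_sum_left, Polynomial.sum_def, Polynomial.sum_def]
  have key : ∀ (e : ℕ), e ∈ A.support → C (A.coeff e) * B ^ e
      = ∑ d ∈ B.support, monomial (d * e) (A.coeff e * B.coeff d) := by
    intro e he
    rw [h1 e he]
    conv_lhs => rw [B.as_sum_support]
    rw [map_sum, Finset.mul_sum]
    refine Finset.sum_congr rfl fun d _ => ?_
    rw [expand_monomial, C_mul_monomial]
  have key2 : ∀ (d : ℕ), d ∈ B.support → C (B.coeff d) * A ^ d
      = ∑ e ∈ A.support, monomial (e * d) (B.coeff d * A.coeff e) := by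
    intro d hd
    rw [h2 d hd]
    conv_lhs => rw [A.as_sum_support]
    rw [map_sum, Finset.mul_sum]
    refine Finset.sum_congr rfl fun e _ => ?_
    rw [expand_monomial, C_mul_monomial]
  rw [Finset.sum_congr rfl key, Finset.sum_congr rfl key2, Finset.sum_comm]
  refine Finset.sum_congr rfl fun e _ => Finset.sum_congr rfl fun d _ => ?_
  rw [mul_comm (A.coeff d), mul_comm e d]

lemma additive_natDeg {F : Type*} [Field F] {p : ℕ} [Fact p.Prime]
    {A : Polynomial F} (hA : IsAdditivePoly p A) (h0 : A ≠ 0) : 1 ≤ A.natDegree := by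
  obtain ⟨h, hh⟩ := hA A.natDegree (by simpa using mt leadingCoeff_eq_zero.mp h0)
  rw [hh]
  exact Nat.one_le_pow _ _ (Fact.out : p.Prime).pos

lemma additive_comp_zero {F : Type*} [Field F] {p : ℕ} [Fact p.Prime]
    {C : Polynomial F} (hC : IsAdditivePoly p C) : C.comp 0 = 0 := by
  have h0 : C.coeff 0 = 0 := by
    by_contra h
    obtain ⟨h', hh⟩ := hC 0 h
    exact (pow_pos (Fact.out : p.Prime).pos h').ne' hh.symm
  rw [comp_zero, ← coeff_zero_eq_eval_zero, h0, map_zero]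

lemma comp_cancel {F : Type*} [Field F] {D E A : Polynomial F} (hA : 1 ≤ A.natDegree)
    (h : D.comp A = E.comp A) : D = E := by
  have hz : (D - E).comp A = 0 := by rw [sub_comp, h, sub_self]
  rcases Polynomial.comp_eq_zero_iff.mp hz with h' | ⟨_, h'⟩
  · exact sub_eq_zero.mp h'
  · exact absurd (h' ▸ natDegree_C _) (by omega)

lemma polyIter_comp {F : Type*} [Field F] (P Q : Polynomial F) (n : ℕ) :
    (polyIter P n).comp Q = (fun R => P.comp R)^[n] Q := by
  induction n with
  | zero => simp [polyIter]
  | succ n ih =>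
    rw [polyIter, Function.iterate_succ_apply', Function.iterate_succ_apply',
      ← polyIter, comp_assoc, ih]

lemma polyIter_comm {F : Type*} [Field F] (P : Polynomial F) (n : ℕ) :
    (polyIter P n).comp P = P.comp (polyIter P n) := by
  rw [polyIter_comp]
  have h1 : (fun R => P.comp R)^[n] P = (fun R => P.comp R)^[n + 1] Polynomial.X := by
    rw [Function.iterate_succ_apply]; simp
  rw [h1, Function.iterate_succ_apply']
  rfl

lemma polyIter_natDegree {F : Type*} [Field F] (P : Polynomial F) (n : ℕ) :
    (polyIter P n).natDegree = P.natDegree ^ n := by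
  induction n with
  | zero => simp [polyIter]
  | succ n ih =>
    rw [polyIter, Function.iterate_succ_apply', ← polyIter, natDegree_comp, ih, pow_succ,
      mul_comm]

theorem additive_comp_comm (p : ℕ) [Fact p.Prime] (F : Type*) [Field F] [Fintype F]
    [CharP F p] (A C : Polynomial F) (hA : IsAdditivePoly p A) (hC : IsAdditivePoly p C)
    (hform : ∀ i : ℕ, (C.comp A).coeff i ≠ 0 → ∃ h : ℕ, i = Fintype.card F ^ h)
    (hprime : ∀ i : ℕ, ((C.comp A).coeff i) ^ p = (C.comp A).coeff i) :
    A.comp C = C.comp A ∧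
    ∀ (k : ℕ) (A₀ : Polynomial F), 1 ≤ k → IsAdditivePoly p A₀ →
      A = polyIter A₀ k → A₀.comp C = C.comp A₀ := by
  obtain ⟨m, hp', hm⟩ := FiniteField.card F p
  -- key commuting lemma: any additive poly commutes with B := C.comp A
  have key : ∀ D : Polynomial F, IsAdditivePoly p D →
      D.comp (C.comp A) = (C.comp A).comp D := by
    intro D hD
    apply comp_comm_of_expand
    · intro e he
      obtain ⟨h, hh⟩ := hD e (mem_support_iff.mp he)
      subst hh
      exact pow_eq_expand (C.comp A) h fun d => fix_pow (hprime d) h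
    · intro d hd
      obtain ⟨i, hi⟩ := hform d (mem_support_iff.mp hd)
      subst hi
      have hqi : Fintype.card F ^ i = p ^ ((m : ℕ) * i) := by rw [hm, pow_mul]
      rw [hqi]
      refine pow_eq_expand D _ fun e => ?_
      rw [← hqi]
      exact fix_pow (FiniteField.pow_card (D.coeff e)) i
  constructor
  · -- A.comp C = C.comp A
    by_cases h0 : A = 0
    · rw [h0, zero_comp, additive_comp_zero hC]
    · have hd := additive_natDeg hA h0
      apply comp_cancel hd
      have h := key A hA
      rw [← comp_assoc] at h
      exact h
  · intro k A₀ hk hA₀ hiter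
    by_cases h0 : A = 0
    · -- then A₀ = 0
      have h00 : A₀ = 0 := by
        by_contra hne
        have hd0 := additive_natDeg hA₀ hne
        have hdeg : A.natDegree = A₀.natDegree ^ k := by
          rw [hiter, polyIter_natDegree]
        rw [h0, natDegree_zero] at hdeg
        have : 1 ≤ A₀.natDegree ^ k := Nat.one_le_pow _ _ (by omega)
        omega
      rw [h00, zero_comp, additive_comp_zero hC]
    · have hd := additive_natDeg hA h0
      apply comp_cancel hd
      have hcomm := key A₀ hA₀
      have hAA : A.comp A₀ = A₀.comp A := by rw [hiter]; exact polyIter_comm A₀ k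
      calc (A₀.comp C).comp A = A₀.comp (C.comp A) := by rw [comp_assoc]
        _ = (C.comp A).comp A₀ := hcomm
        _ = C.comp (A.comp A₀) := by rw [comp_assoc]
        _ = C.comp (A₀.comp A) := by rw [hAA]
        _ = (C.comp A₀).comp A := by rw [comp_assoc]
end

section
/- Let f ∈ F_q[X] be a nonconstant polynomial not divisible by X, let f_0 be its squarefree part, let e be the least positive integer such that f(X) divides f_0(X)^e, and let E = ord(f_0). Set A(X) = L_f(X), the q-linearized associate of f. Then for every integer n ≥ 1, one has s_A(n) = E·p^{⌈log_p(ne)⌉} (equivalently, s_A(n) = E·p^i where i is the least nonnegative integer with p^i ≥ ne). In particular, liminf_{n→∞} s_A(n)/n = E·e. -/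
open Polynomial Filter

/-- `polyOrd g` : the order of a polynomial `g` with `g(0) ≠ 0`, i.e. the least
positive integer `i` such that `g(X)` divides `X^i - 1`. -/
noncomputable def polyOrd {F : Type*} [Field F] (g : Polynomial F) : ℕ :=
  sInf {i : ℕ | 0 < i ∧ g ∣ Polynomial.X ^ i - 1}

/-- `qLin f` : the `q`-linearized associate `L_f(X) = ∑ aᵢ X^(qⁱ)` of
`f(X) = ∑ aᵢ Xⁱ`, where `q = #F`. -/
noncomputable def qLin {F : Type*} [Field F] [Fintype F] (f : Polynomial F) : Polynomial F :=
  ∑ i ∈ Finset.range (f.natDegree + 1),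
    Polynomial.C (f.coeff i) * Polynomial.X ^ Fintype.card F ^ i

section Tau
variable (p : ℕ) [Fact p.Prime] (F : Type*) [Field F] [Fintype F] [CharP F p]
include p

local notation "K" => AlgebraicClosure F
local notation "q" => Fintype.card F

lemma q_pow_add (x y : K) : (x + y) ^ (q : ℕ) = x ^ (q : ℕ) + y ^ (q : ℕ) := by
  obtain ⟨n, hp, hc⟩ := FiniteField.card F p
  rw [hc]
  exact add_pow_char_pow x y p n

noncomputable def tauEnd : Module.End F K where
  toFun x := x ^ (q : ℕ)
  map_add' x y := q_pow_add p F x y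
  map_smul' a x := by
    simp only [RingHom.id_apply, Algebra.smul_def, mul_pow, ← map_pow, FiniteField.pow_card]

lemma tauEnd_apply (x : K) : tauEnd p F x = x ^ (q : ℕ) := rfl

lemma tauEnd_pow_apply (i : ℕ) (x : K) : ((tauEnd p F) ^ i) x = x ^ ((q:ℕ) ^ i) := by
  induction i with
  | zero => simp
  | succ n ih =>
      rw [pow_succ', Module.End.mul_apply, tauEnd_apply, ih, ← pow_mul, ← pow_succ]

lemma aeval_qLin (g : Polynomial F) (x : K) :
    aeval x (qLin g) = aeval (tauEnd p F) g x := by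
  rw [qLin, map_sum, aeval_eq_sum_range (tauEnd p F) (p := g)]
  rw [LinearMap.coe_sum, Finset.sum_apply]
  refine Finset.sum_congr rfl fun i _ => ?_
  rw [map_mul, aeval_C, map_pow, aeval_X, LinearMap.smul_apply, tauEnd_pow_apply,
    Algebra.smul_def]

lemma aeval_polyIter (f : Polynomial F) (n : ℕ) (x : K) :
    aeval x (polyIter (qLin f) n) = aeval (tauEnd p F) (f ^ n) x := by
  induction n generalizing x with
  | zero => simp [polyIter]
  | succ n ih =>
    rw [polyIter, Function.iterate_succ_apply', ← polyIter, aeval_comp, ih,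
      aeval_qLin p F, pow_succ', map_mul, Module.End.mul_apply]

omit [Fact p.Prime] [CharP F p] in
lemma one_lt_q : 1 < (q : ℕ) := Fintype.one_lt_card

omit [Fact p.Prime] [CharP F p] in
lemma qLin_coeff_qpow (g : Polynomial F) {i : ℕ} (hi : i ≤ g.natDegree) :
    (qLin g).coeff ((q:ℕ) ^ i) = g.coeff i := by
  rw [qLin, Polynomial.finset_sum_coeff]
  rw [Finset.sum_eq_single i]
  · simp
  · intro j hj hji
    rw [Polynomial.coeff_C_mul, Polynomial.coeff_X_pow, if_neg, mul_zero]
    exact fun h => hji (Nat.pow_right_injective (one_lt_q p F) h.symm)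
  · intro h
    exact absurd (Finset.mem_range.2 (Nat.lt_succ_of_le hi)) h

omit [Fact p.Prime] [CharP F p] in
lemma qLin_natDegree (g : Polynomial F) (hg : g ≠ 0) :
    (qLin g).natDegree = (q:ℕ) ^ g.natDegree := by
  apply le_antisymm
  · apply Polynomial.natDegree_sum_le_of_forall_le
    intro i hi
    apply le_trans (Polynomial.natDegree_C_mul_le _ _)
    rw [Polynomial.natDegree_X_pow]
    exact Nat.pow_le_pow_right (Nat.one_le_of_lt (one_lt_q p F))
      (Nat.lt_succ_iff.1 (Finset.mem_range.1 hi))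
  · apply Polynomial.le_natDegree_of_ne_zero
    rw [qLin_coeff_qpow p F g le_rfl]
    exact Polynomial.leadingCoeff_ne_zero.2 hg

omit [Fact p.Prime] [CharP F p] in
lemma qLin_ne_zero (g : Polynomial F) (hg : g ≠ 0) : qLin g ≠ 0 := by
  intro h
  have := qLin_coeff_qpow p F g (le_refl g.natDegree)
  rw [h, Polynomial.coeff_zero] at this
  exact Polynomial.leadingCoeff_ne_zero.2 hg this.symm

lemma qLin_derivative (g : Polynomial F) :
    Polynomial.derivative (qLin g) = Polynomial.C (g.coeff 0) := by
  rw [qLin, map_sum]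
  obtain ⟨m, hp, hc⟩ := FiniteField.card F p
  rw [Finset.sum_eq_single 0]
  · simp
  · intro i hi hi0
    have hz : (((q:ℕ) ^ i : ℕ) : F) = 0 :=
      (CharP.cast_eq_zero_iff F p _).2
        (dvd_pow (hc ▸ dvd_pow_self p m.ne_zero) hi0)
    rw [Polynomial.derivative_C_mul, Polynomial.derivative_X_pow]
    simp [hz]
  · intro h
    exact absurd (Finset.mem_range.2 (Nat.succ_pos _)) h

lemma qLin_separable (g : Polynomial F) (hg0 : g.coeff 0 ≠ 0) :
    (qLin g).Separable := by
  rw [Polynomial.Separable, qLin_derivative p F g]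
  exact ⟨0, Polynomial.C (g.coeff 0)⁻¹, by simp [← Polynomial.C_mul, inv_mul_cancel₀ hg0]⟩

/-- the τ-kernel of g -/
def rootK (g : Polynomial F) : Set K := {x : K | aeval (tauEnd p F) g x = 0}

lemma rootK_eq_rootSet (g : Polynomial F) (hg : g ≠ 0) :
    rootK p F g = (qLin g).rootSet K := by
  ext x
  rw [Polynomial.mem_rootSet]
  simp only [rootK, Set.mem_setOf_eq, ← aeval_qLin p F]
  exact ⟨fun h => ⟨qLin_ne_zero p F g hg, h⟩, fun h => h.2⟩

lemma ncard_rootK (g : Polynomial F) (hg : g ≠ 0) (hg0 : g.coeff 0 ≠ 0) :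
    Nat.card (rootK p F g) = (q:ℕ) ^ g.natDegree := by
  rw [rootK_eq_rootSet p F g hg, Nat.card_eq_fintype_card,
    Polynomial.card_rootSet_eq_natDegree (qLin_separable p F g hg0)
      (IsAlgClosed.splits _), qLin_natDegree p F g hg]

lemma aeval_mul_apply (A B : Polynomial F) (x : K) :
    aeval (tauEnd p F) (A * B) x = aeval (tauEnd p F) A (aeval (tauEnd p F) B x) := by
  rw [map_mul, Module.End.mul_apply]

lemma rootK_subset_of_dvd {d g : Polynomial F} (h : d ∣ g) :
    rootK p F d ⊆ rootK p F g := by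
  obtain ⟨c, rfl⟩ := h
  intro x hx
  have : aeval (tauEnd p F) (d * c) x = 0 := by
    rw [mul_comm, aeval_mul_apply, hx, map_zero]
  exact this

lemma exists_rootK_pow_diff {π : Polynomial F} (hπ : Prime π) (hπ0 : π.coeff 0 ≠ 0)
    {k : ℕ} (hk : 1 ≤ k) :
    ∃ x, x ∈ rootK p F (π ^ k) ∧ x ∉ rootK p F (π ^ (k - 1)) := by
  have hπne : π ≠ 0 := hπ.ne_zero
  have hd : 0 < π.natDegree := hπ.irreducible.natDegree_pos
  have hcoeff : ∀ j : ℕ, (π ^ j).coeff 0 ≠ 0 := by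
    intro j
    rw [Polynomial.coeff_zero_eq_eval_zero, Polynomial.eval_pow]
    exact pow_ne_zero _ (by rwa [← Polynomial.coeff_zero_eq_eval_zero])
  have hcard : ∀ j : ℕ, Nat.card (rootK p F (π ^ j)) = (q:ℕ) ^ (j * π.natDegree) := by
    intro j
    rw [ncard_rootK p F _ (pow_ne_zero _ hπne) (hcoeff j), Polynomial.natDegree_pow]
  by_contra hsub
  push_neg at hsub
  have hss : rootK p F (π ^ k) ⊆ rootK p F (π ^ (k - 1)) := fun x hx => hsub x hx
  have hfin : (rootK p F (π ^ (k-1))).Finite := by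
    rw [rootK_eq_rootSet p F _ (pow_ne_zero _ hπne)]
    exact (qLin (π ^ (k-1))).rootSet_finite K
  have := Nat.card_mono hfin hss
  rw [hcard k, hcard (k-1)] at this
  have hlt : (k - 1) * π.natDegree < k * π.natDegree :=
    (Nat.mul_lt_mul_right hd).2 (Nat.sub_lt hk Nat.one_pos)
  exact absurd this (not_le.2 (Nat.pow_lt_pow_right (one_lt_q p F) hlt))

lemma prime_pow_dvd_of_rootK_subset {g h : Polynomial F} (hg0 : g.coeff 0 ≠ 0)
    (hh : h ≠ 0) (H : rootK p F g ⊆ rootK p F h)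
    {π : Polynomial F} (hπ : Prime π) {k : ℕ} (hdvd : π ^ k ∣ g) : π ^ k ∣ h := by
  rcases Nat.eq_zero_or_pos k with rfl | hk
  · simpa using one_dvd h
  have hπ0 : π.coeff 0 ≠ 0 := by
    intro h0
    have : Polynomial.X ∣ g := dvd_trans (Polynomial.X_dvd_iff.2 h0)
      (dvd_trans (dvd_pow_self π hk.ne') hdvd)
    exact hg0 (Polynomial.X_dvd_iff.1 this)
  obtain ⟨x, hx1, hx2⟩ := exists_rootK_pow_diff p F hπ hπ0 hk
  have hx1' : aeval (tauEnd p F) (π ^ k) x = 0 := hx1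
  have hxh : x ∈ rootK p F h := H (rootK_subset_of_dvd p F hdvd hx1)
  have hxh' : aeval (tauEnd p F) h x = 0 := hxh
  obtain ⟨t, u, hu, rfl⟩ := WfDvdMonoid.max_power_factor hh hπ.irreducible
  -- show k ≤ t
  have hkt : k ≤ t := by
    by_contra hlt
    push_neg at hlt
    have ht' : t ≤ k - 1 := Nat.le_sub_one_of_lt hlt
    have hcop : IsCoprime (π ^ k) u := ((hπ.coprime_iff_not_dvd).2 hu).pow_left
    obtain ⟨a, b, hab⟩ := hcop
    have x_eq : aeval (tauEnd p F) (b * u) x = x := by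
      have h1 := congrArg (fun P => aeval (tauEnd p F) P x) hab
      simp only [map_add, map_one, LinearMap.add_apply, Module.End.one_apply] at h1
      rw [aeval_mul_apply, hx1', map_zero, zero_add] at h1
      exact h1
    have hsplit : π ^ (k - 1) * (b * u) = (b * π ^ (k - 1 - t)) * (π ^ t * u) := by
      have : π ^ (k-1) = π ^ ((k-1) - t) * π ^ t := by
        rw [← pow_add, Nat.sub_add_cancel ht']
      rw [this]; ring
    have : aeval (tauEnd p F) (π ^ (k - 1)) x = 0 := by
      rw [← x_eq, ← aeval_mul_apply, hsplit, aeval_mul_apply, hxh', map_zero]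
    exact hx2 this
  exact dvd_trans (pow_dvd_pow π hkt) (dvd_mul_right (π ^ t) u)

lemma dvd_of_rootK_subset {g h : Polynomial F} (hg : g ≠ 0) (hg0 : g.coeff 0 ≠ 0)
    (H : rootK p F g ⊆ rootK p F h) : g ∣ h := by
  classical
  rcases eq_or_ne h 0 with rfl | hh
  · exact dvd_zero g
  rw [UniqueFactorizationMonoid.dvd_iff_normalizedFactors_le_normalizedFactors hg hh,
    Multiset.le_iff_count]
  intro π
  by_cases hmem : π ∈ UniqueFactorizationMonoid.normalizedFactors g
  · have hirr := UniqueFactorizationMonoid.irreducible_of_normalized_factor π hmem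
    have hprime := UniqueFactorizationMonoid.prime_of_normalized_factor π hmem
    have hnorm := UniqueFactorizationMonoid.normalize_normalized_factor π hmem
    set k := Multiset.count π (UniqueFactorizationMonoid.normalizedFactors g) with hkdef
    have hdvdg : π ^ k ∣ g := by
      rw [pow_dvd_iff_le_emultiplicity,
        UniqueFactorizationMonoid.emultiplicity_eq_count_normalizedFactors hirr hg, hnorm]
    have hdvdh : π ^ k ∣ h := prime_pow_dvd_of_rootK_subset p F hg0 hh H hprime hdvdg
    have := pow_dvd_iff_le_emultiplicity.1 hdvdh
    rw [UniqueFactorizationMonoid.emultiplicity_eq_count_normalizedFactors hirr hh, hnorm]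
      at this
    exact_mod_cast this
  · rw [Multiset.count_eq_zero_of_notMem hmem]
    exact Nat.zero_le _

lemma splitsIn_iff_dvd (f : Polynomial F) (hf0 : f.coeff 0 ≠ 0) (n j : ℕ) :
    SplitsIn (polyIter (qLin f) n) j ↔ f ^ n ∣ Polynomial.X ^ j - 1 := by
  have hfne : f ≠ 0 := fun h => hf0 (by simp [h])
  have hfn : f ^ n ≠ 0 := pow_ne_zero _ hfne
  have hfn0 : (f ^ n).coeff 0 ≠ 0 := by
    rw [Polynomial.coeff_zero_eq_eval_zero, Polynomial.eval_pow]
    exact pow_ne_zero _ (by rwa [← Polynomial.coeff_zero_eq_eval_zero])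
  have key : ∀ y : K, (y ^ (q:ℕ) ^ j = y) ↔
      aeval (tauEnd p F) ((Polynomial.X : Polynomial F) ^ j - 1) y = 0 := by
    intro y
    rw [map_sub, map_pow, Polynomial.aeval_X, map_one, LinearMap.sub_apply,
      Module.End.one_apply, tauEnd_pow_apply, sub_eq_zero]
  constructor
  · intro h
    refine dvd_of_rootK_subset p F hfn hfn0 ?_
    intro y hy
    exact (key y).1 (h y ((aeval_polyIter p F f n y).trans hy))
  · intro hdvd y hy
    have hy2 : aeval (tauEnd p F) (f ^ n) y = 0 := (aeval_polyIter p F f n y).symm.trans hy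
    exact (key y).2 (rootK_subset_of_dvd p F hdvd hy2)

omit [Fact p.Prime] [CharP F p] in
lemma isCoprime_X_poly (g : Polynomial F) (hg0 : g.coeff 0 ≠ 0) :
    IsCoprime (Polynomial.X : Polynomial F) g := by
  refine ⟨-(Polynomial.C (g.coeff 0)⁻¹ * g.divX), Polynomial.C (g.coeff 0)⁻¹, ?_⟩
  have h1 : Polynomial.C (g.coeff 0)⁻¹ * Polynomial.C (g.coeff 0) = 1 := by
    rw [← Polynomial.C_mul, inv_mul_cancel₀ hg0, Polynomial.C_1]
  have h2 := Polynomial.X_mul_divX_add g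
  linear_combination Polynomial.C (g.coeff 0)⁻¹ * h2.symm + h1

omit [Fact p.Prime] [CharP F p] in
lemma exists_ord (g : Polynomial F) (hmonic : g.Monic) (hg0 : g.coeff 0 ≠ 0) :
    ∃ i, 0 < i ∧ g ∣ Polynomial.X ^ i - 1 := by
  classical
  have key : ∀ a b : ℕ, a < b → Polynomial.X ^ a %ₘ g = Polynomial.X ^ b %ₘ g →
      ∃ i, 0 < i ∧ g ∣ Polynomial.X ^ i - 1 := by
    intro a b hab hrem
    have d1 : ∀ i : ℕ, g ∣ Polynomial.X ^ i - Polynomial.X ^ i %ₘ g := by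
      intro i
      refine ⟨Polynomial.X ^ i /ₘ g, ?_⟩
      rw [Polynomial.modByMonic_eq_sub_mul_div _ g]
      ring
    have d2 : g ∣ Polynomial.X ^ b - Polynomial.X ^ a := by
      have := dvd_sub (d1 b) (d1 a)
      rwa [hrem, sub_sub_sub_cancel_right] at this
    have heq : (Polynomial.X : Polynomial F) ^ b - Polynomial.X ^ a
        = Polynomial.X ^ a * (Polynomial.X ^ (b - a) - 1) := by
      rw [mul_sub, mul_one, ← pow_add, Nat.add_sub_cancel' hab.le]
    refine ⟨b - a, Nat.sub_pos_of_lt hab, ?_⟩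
    rw [heq] at d2
    exact ((isCoprime_X_poly p F g hg0).symm.pow_right).dvd_of_dvd_mul_left d2
  obtain ⟨a, b, hab, hfeq⟩ := Finite.exists_ne_map_eq_of_infinite
    (fun i : ℕ => fun j : Fin g.natDegree => (Polynomial.X ^ i %ₘ g).coeff j)
  have hrem : Polynomial.X ^ a %ₘ g = Polynomial.X ^ b %ₘ g := by
    ext j
    by_cases hj : j < g.natDegree
    · exact congrFun hfeq ⟨j, hj⟩
    · have hz : ∀ i : ℕ, (Polynomial.X ^ i %ₘ g).coeff j = 0 := by
        intro i
        apply Polynomial.coeff_eq_zero_of_degree_lt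
        exact lt_of_lt_of_le (Polynomial.degree_modByMonic_lt _ hmonic)
          (le_trans Polynomial.degree_le_natDegree (by exact_mod_cast Nat.not_lt.1 hj))
      rw [hz, hz]
  rcases hab.lt_or_gt with h | h
  · exact key a b h hrem
  · exact key b a h hrem.symm

omit [Fact p.Prime] [CharP F p] in
lemma polyOrd_spec (g : Polynomial F) (hmonic : g.Monic) (hg0 : g.coeff 0 ≠ 0) :
    0 < polyOrd g ∧ g ∣ Polynomial.X ^ (polyOrd g) - 1 :=
  Nat.sInf_mem (exists_ord p F g hmonic hg0)

omit [Fact p.Prime] [CharP F p] in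
lemma dvd_X_pow_sub_one_of_ord_dvd (g : Polynomial F) {E j : ℕ}
    (hgE : g ∣ Polynomial.X ^ E - 1) (h : E ∣ j) : g ∣ Polynomial.X ^ j - 1 := by
  obtain ⟨t, rfl⟩ := h
  have := sub_dvd_pow_sub_pow ((Polynomial.X : Polynomial F) ^ E) 1 t
  rw [one_pow, ← pow_mul] at this
  exact hgE.trans this

omit [Fact p.Prime] [CharP F p] in
lemma ord_dvd_iff (g : Polynomial F) (hmonic : g.Monic) (hg0 : g.coeff 0 ≠ 0) (j : ℕ) :
    g ∣ Polynomial.X ^ j - 1 ↔ polyOrd g ∣ j := by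
  obtain ⟨hE, hdvd⟩ := polyOrd_spec p F g hmonic hg0
  set E := polyOrd g with hEdef
  constructor
  · intro h
    have hjr : E * (j / E) + j % E = j := Nat.div_add_mod j E
    have h1 : g ∣ Polynomial.X ^ (E * (j / E)) - 1 :=
      dvd_X_pow_sub_one_of_ord_dvd p F g hdvd ⟨j / E, rfl⟩
    have h2 : g ∣ (Polynomial.X : Polynomial F) ^ j - Polynomial.X ^ (E * (j / E)) := by
      have := dvd_sub h h1
      rwa [sub_sub_sub_cancel_right] at this
    have heq : (Polynomial.X : Polynomial F) ^ j - Polynomial.X ^ (E * (j / E))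
        = Polynomial.X ^ (E * (j / E)) * (Polynomial.X ^ (j % E) - 1) := by
      rw [mul_sub, mul_one, ← pow_add, hjr]
    rw [heq] at h2
    have h3 : g ∣ Polynomial.X ^ (j % E) - 1 :=
      ((isCoprime_X_poly p F g hg0).symm.pow_right).dvd_of_dvd_mul_left h2
    rcases Nat.eq_zero_or_pos (j % E) with hr | hr
    · exact Nat.dvd_of_mod_eq_zero hr
    · exfalso
      have hmem : (j % E) ∈ {i : ℕ | 0 < i ∧ g ∣ Polynomial.X ^ i - 1} := ⟨hr, h3⟩
      have : E ≤ j % E := Nat.sInf_le hmem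
      exact absurd this (Nat.not_le.2 (Nat.mod_lt _ hE))
  · exact dvd_X_pow_sub_one_of_ord_dvd p F g hdvd

lemma X_pow_mul_sub_one (m v : ℕ) :
    (Polynomial.X : Polynomial F) ^ (m * p ^ v) - 1
      = ((Polynomial.X : Polynomial F) ^ m - 1) ^ p ^ v := by
  rw [sub_pow_char_pow ((Polynomial.X : Polynomial F) ^ m) 1 v, one_pow, ← pow_mul]

lemma not_p_dvd_polyOrd (g : Polynomial F) (hmonic : g.Monic) (hg0 : g.coeff 0 ≠ 0)
    (hsq : Squarefree g) : ¬ p ∣ polyOrd g := by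
  obtain ⟨hE, hdvd⟩ := polyOrd_spec p F g hmonic hg0
  rintro ⟨E', hEeq⟩
  have hp1 : 1 < p := (Fact.out : p.Prime).one_lt
  rw [hEeq] at hdvd hE
  have hE2 : 0 < E' := Nat.pos_of_ne_zero (fun h0 => by simp [h0] at hE)
  have heq : (Polynomial.X : Polynomial F) ^ (p * E') - 1
      = ((Polynomial.X : Polynomial F) ^ E' - 1) ^ p := by
    rw [sub_pow_char ((Polynomial.X : Polynomial F) ^ E') 1, one_pow, ← pow_mul, mul_comm]
  rw [heq] at hdvd
  have h2 : g ∣ (Polynomial.X : Polynomial F) ^ E' - 1 :=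
    (hsq.dvd_pow_iff_dvd (Nat.Prime.ne_zero Fact.out)).1 hdvd
  have hmem : E' ∈ {i : ℕ | 0 < i ∧ g ∣ Polynomial.X ^ i - 1} := ⟨hE2, h2⟩
  have hle : polyOrd g ≤ E' := Nat.sInf_le hmem
  rw [hEeq] at hle
  nlinarith

lemma squarefree_X_pow_sub_one {m : ℕ} (hm : 0 < m) (hpm : ¬ p ∣ m) :
    Squarefree ((Polynomial.X : Polynomial F) ^ m - 1) := by
  have hcast : (m : F) ≠ 0 := fun h => hpm ((CharP.cast_eq_zero_iff F p m).1 h)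
  have := (Polynomial.separable_X_pow_sub_C (1 : F) hcast one_ne_zero).squarefree
  rwa [Polynomial.C_1] at this

omit [Fact p.Prime] [CharP F p] in
lemma dvd_of_forall_prime_pow_dvd {g h : Polynomial F} (hg : g ≠ 0) (hh : h ≠ 0)
    (H : ∀ π : Polynomial F, Prime π → ∀ k : ℕ, π ^ k ∣ g → π ^ k ∣ h) : g ∣ h := by
  classical
  rw [UniqueFactorizationMonoid.dvd_iff_normalizedFactors_le_normalizedFactors hg hh,
    Multiset.le_iff_count]
  intro π
  by_cases hmem : π ∈ UniqueFactorizationMonoid.normalizedFactors g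
  · have hirr := UniqueFactorizationMonoid.irreducible_of_normalized_factor π hmem
    have hprime := UniqueFactorizationMonoid.prime_of_normalized_factor π hmem
    have hnorm := UniqueFactorizationMonoid.normalize_normalized_factor π hmem
    set k := Multiset.count π (UniqueFactorizationMonoid.normalizedFactors g) with hkdef
    have hdvdg : π ^ k ∣ g := by
      rw [pow_dvd_iff_le_emultiplicity,
        UniqueFactorizationMonoid.emultiplicity_eq_count_normalizedFactors hirr hg, hnorm]
    have := pow_dvd_iff_le_emultiplicity.1 (H π hprime k hdvdg)
    rw [UniqueFactorizationMonoid.emultiplicity_eq_count_normalizedFactors hirr hh, hnorm]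
      at this
    exact_mod_cast this
  · rw [Multiset.count_eq_zero_of_notMem hmem]
    exact Nat.zero_le _

omit [Fact p.Prime] [CharP F p] in
lemma le_of_prime_pow_dvd_pow {π s : Polynomial F} (hπ : Prime π) (hs : Squarefree s)
    {N v : ℕ} (h : π ^ N ∣ s ^ v) : N ≤ v := by
  have hs0 : s ≠ 0 := hs.ne_zero
  have h2 : ¬ π ^ 2 ∣ s := by
    intro hd
    rw [pow_two] at hd
    exact hπ.not_unit (hs π hd)
  have hemult : emultiplicity π s ≤ 1 := by
    by_contra hgt
    push_neg at hgt
    have : ((2:ℕ) : ℕ∞) ≤ emultiplicity π s := by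
      have := Order.add_one_le_of_lt hgt
      simpa [one_add_one_eq_two] using this
    exact h2 (pow_dvd_iff_le_emultiplicity.2 this)
  have h1 : ((N:ℕ) : ℕ∞) ≤ emultiplicity π (s ^ v) := pow_dvd_iff_le_emultiplicity.1 h
  rw [emultiplicity_pow hπ] at h1
  have h3 : (v : ℕ∞) * emultiplicity π s ≤ (v : ℕ∞) * 1 := mul_le_mul_right hemult _
  rw [mul_one] at h3
  exact_mod_cast h1.trans h3

omit [Fact p.Prime] [CharP F p] in
lemma exists_prime_pow_dvd (f f₀ : Polynomial F) (e : ℕ)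
    (hfdeg : 0 < f.natDegree) (hf₀ne : f₀ ≠ 0)
    (hf₀rad : ∀ g : Polynomial F, Prime g → g ∣ f → g ∣ f₀)
    (he : 0 < e) (hemin : ∀ m : ℕ, 0 < m → f ∣ f₀ ^ m → e ≤ m) :
    ∃ π : Polynomial F, Prime π ∧ π ^ e ∣ f := by
  have hfne : f ≠ 0 := fun h => by simp [h] at hfdeg
  by_contra hno
  push_neg at hno
  have hdvd : f ∣ f₀ ^ (e - 1) := by
    apply dvd_of_forall_prime_pow_dvd p F hfne (pow_ne_zero _ hf₀ne)
    intro π hπ k hk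
    have hkle : k ≤ e - 1 := by
      by_contra hgt
      push_neg at hgt
      exact hno π hπ ((pow_dvd_pow π (by omega : e ≤ k)).trans hk)
    rcases Nat.eq_zero_or_pos k with rfl | hkpos
    · simpa using one_dvd _
    · have hπf : π ∣ f := (dvd_pow_self π hkpos.ne').trans hk
      exact (pow_dvd_pow π hkle).trans (pow_dvd_pow_of_dvd (hf₀rad π hπ hπf) _)
  rcases Nat.eq_zero_or_pos (e - 1) with h0 | hpos
  · rw [h0, pow_zero] at hdvd
    have := Polynomial.natDegree_eq_zero_of_isUnit (isUnit_of_dvd_one hdvd)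
    omega
  · exact absurd (hemin (e - 1) hpos hdvd) (by omega)

theorem key_formula (f f₀ : Polynomial F) (e : ℕ)
    (hfdeg : 0 < f.natDegree) (hfX : ¬ Polynomial.X ∣ f)
    (hf₀monic : f₀.Monic) (hf₀sf : Squarefree f₀) (hf₀dvd : f₀ ∣ f)
    (hf₀rad : ∀ g : Polynomial F, Prime g → g ∣ f → g ∣ f₀)
    (he : 0 < e) (hfe : f ∣ f₀ ^ e) (hemin : ∀ m : ℕ, 0 < m → f ∣ f₀ ^ m → e ≤ m)
    (n : ℕ) (hn : 1 ≤ n) :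
    sInf {j : ℕ | 0 < j ∧ SplitsIn (polyIter (qLin f) n) j}
      = polyOrd f₀ * p ^ sInf {i : ℕ | n * e ≤ p ^ i} := by
  have hp1 : 1 < p := (Fact.out : p.Prime).one_lt
  have hf0 : f.coeff 0 ≠ 0 := fun h => hfX (Polynomial.X_dvd_iff.2 h)
  have hfne : f ≠ 0 := fun h => hf0 (by simp [h])
  have hf₀ne : f₀ ≠ 0 := hf₀monic.ne_zero
  have hf₀0 : f₀.coeff 0 ≠ 0 := by
    intro h
    exact hfX ((Polynomial.X_dvd_iff.2 h).trans hf₀dvd)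
  obtain ⟨hEpos, hEdvd⟩ := polyOrd_spec p F f₀ hf₀monic hf₀0
  set E := polyOrd f₀ with hEdef
  have hpE : ¬ p ∣ E := not_p_dvd_polyOrd p F f₀ hf₀monic hf₀0 hf₀sf
  have hKne : ({i : ℕ | n * e ≤ p ^ i}).Nonempty :=
    ⟨n * e, (Nat.lt_pow_self (n := n * e) hp1).le⟩
  set KK := sInf {i : ℕ | n * e ≤ p ^ i} with hKdef
  have hKK : n * e ≤ p ^ KK := Nat.sInf_mem hKne
  obtain ⟨π, hπ, hπe⟩ := exists_prime_pow_dvd p F f f₀ e hfdeg hf₀ne hf₀rad he hemin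
  -- identify the set
  have hset : {j : ℕ | 0 < j ∧ SplitsIn (polyIter (qLin f) n) j}
      = {j : ℕ | 0 < j ∧ f ^ n ∣ Polynomial.X ^ j - 1} := by
    ext j
    exact and_congr_right fun _ => splitsIn_iff_dvd p F f hf0 n j
  rw [hset]
  -- membership
  have hmem : (E * p ^ KK) ∈ {j : ℕ | 0 < j ∧ f ^ n ∣ Polynomial.X ^ j - 1} := by
    constructor
    · positivity
    · have h1 : f ^ n ∣ f₀ ^ (n * e) := by
        have := pow_dvd_pow_of_dvd hfe n
        rwa [← pow_mul, mul_comm e n] at this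
      have h2 : f₀ ^ (n * e) ∣ ((Polynomial.X : Polynomial F) ^ E - 1) ^ (n * e) :=
        pow_dvd_pow_of_dvd hEdvd _
      have h3 : ((Polynomial.X : Polynomial F) ^ E - 1) ^ (n * e)
          ∣ ((Polynomial.X : Polynomial F) ^ E - 1) ^ (p ^ KK) := pow_dvd_pow _ hKK
      have h4 := (h1.trans h2).trans h3
      rwa [← X_pow_mul_sub_one p F E KK] at h4
  -- lower bound
  have hlb : ∀ j ∈ {j : ℕ | 0 < j ∧ f ^ n ∣ Polynomial.X ^ j - 1}, E * p ^ KK ≤ j := by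
    rintro j ⟨hjpos, hjdvd⟩
    have hEj : E ∣ j := by
      rw [← ord_dvd_iff p F f₀ hf₀monic hf₀0 j]
      exact (hf₀dvd.trans (dvd_pow_self f (by omega : n ≠ 0))).trans hjdvd
    set v := j.factorization p with hvdef
    have hpvj : p ^ v ∣ j := Nat.ordProj_dvd j p
    have hmj : p ^ v * (j / p ^ v) = j := Nat.ordProj_mul_ordCompl_eq_self j p
    set m := j / p ^ v with hmdef
    have hmpos : 0 < m := Nat.ordCompl_pos p hjpos.ne'
    have hpm : ¬ p ∣ m := Nat.not_dvd_ordCompl (Fact.out : p.Prime) hjpos.ne'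
    have hXj : (Polynomial.X : Polynomial F) ^ j - 1
        = ((Polynomial.X : Polynomial F) ^ m - 1) ^ p ^ v := by
      rw [← X_pow_mul_sub_one p F m v, mul_comm m (p ^ v), hmj]
    have hπn : π ^ (n * e) ∣ f ^ n := by
      have := pow_dvd_pow_of_dvd hπe n
      rwa [← pow_mul, mul_comm e n] at this
    have hne_le : n * e ≤ p ^ v := by
      apply le_of_prime_pow_dvd_pow p F hπ (squarefree_X_pow_sub_one p F hmpos hpm)
      rw [← hXj]
      exact hπn.trans hjdvd
    have hKv : KK ≤ v := Nat.sInf_le hne_le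
    have hcop : Nat.Coprime E (p ^ KK) :=
      (((Fact.out : p.Prime).coprime_iff_not_dvd.2 hpE).pow_left _).symm
    have hdvdj : E * p ^ KK ∣ j :=
      hcop.mul_dvd_of_dvd_of_dvd hEj ((pow_dvd_pow p hKv).trans hpvj)
    exact Nat.le_of_dvd hjpos hdvdj
  have h1 : sInf {j : ℕ | 0 < j ∧ f ^ n ∣ Polynomial.X ^ j - 1} ≤ E * p ^ KK :=
    Nat.sInf_le hmem
  have h2 : E * p ^ KK ≤ sInf {j : ℕ | 0 < j ∧ f ^ n ∣ Polynomial.X ^ j - 1} :=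
    hlb _ (Nat.sInf_mem ⟨_, hmem⟩)
  omega

end Tau

open Topology in

theorem liminf_formula (p e E : ℕ) (hp : 1 < p) (he : 0 < e) (hE : 0 < E) (s : ℕ → ℕ)
    (hs : ∀ n : ℕ, 1 ≤ n → s n = E * p ^ sInf {i : ℕ | n * e ≤ p ^ i}) :
    Filter.liminf (fun n : ℕ => (s n : ℝ) / n) Filter.atTop = (E : ℝ) * e := by
  set u : ℕ → ℝ := fun n : ℕ => (s n : ℝ) / n with hu
  set Kf : ℕ → ℕ := fun n => sInf {i : ℕ | n * e ≤ p ^ i} with hKf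
  have hKn : ∀ n : ℕ, n * e ≤ p ^ Kf n := by
    intro n
    exact (Nat.sInf_mem (⟨n * e, (Nat.lt_pow_self (n := n*e) hp).le⟩ :
      Set.Nonempty {i : ℕ | n * e ≤ p ^ i}) : n * e ≤ p ^ Kf n)
  have hKmin : ∀ n i : ℕ, n * e ≤ p ^ i → Kf n ≤ i := fun n i h => Nat.sInf_le h
  -- pointwise lower bound
  have hlow : ∀ n : ℕ, 1 ≤ n → (E : ℝ) * e ≤ u n := by
    intro n hn
    have h1 : E * (n * e) ≤ s n := by
      rw [hs n hn]
      exact Nat.mul_le_mul_left E (hKn n)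
    have hnpos : (0:ℝ) < n := by exact_mod_cast hn
    rw [hu, le_div_iff₀ hnpos]
    have : (E:ℝ) * (n * e) ≤ (s n : ℝ) := by exact_mod_cast h1
    nlinarith
  -- pointwise upper bound
  have hup : ∀ n : ℕ, 1 ≤ n → u n ≤ (E : ℝ) * e * p := by
    intro n hn
    have h1 : s n ≤ E * p * (n * e) := by
      rw [hs n hn]
      rcases Nat.eq_zero_or_pos (Kf n) with h0 | hpos
      · rw [show sInf {i : ℕ | n * e ≤ p ^ i} = Kf n from rfl, h0, pow_zero, mul_one]
        have h1p : 0 < p * (n * e) := by positivity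
        nlinarith
      · have hkk : p ^ (Kf n - 1) < n * e := by
          by_contra hle
          push_neg at hle
          have := hKmin n (Kf n - 1) hle
          omega
        have : p ^ Kf n = p * p ^ (Kf n - 1) := by
          rw [← pow_succ', Nat.sub_add_cancel hpos]
        rw [show sInf {i : ℕ | n * e ≤ p ^ i} = Kf n from rfl, this]
        have h2 : p * p ^ (Kf n - 1) ≤ p * (n * e) := by
          exact Nat.mul_le_mul_left p (by omega)
        nlinarith
    have hnpos : (0:ℝ) < n := by exact_mod_cast hn
    rw [hu, div_le_iff₀ hnpos]
    have : (s n : ℝ) ≤ (E:ℝ) * p * (n * e) := by exact_mod_cast h1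
    nlinarith
  have hposu : ∀ n, 0 ≤ u n := fun n => div_nonneg (Nat.cast_nonneg _) (Nat.cast_nonneg _)
  have hbddAbove : IsBoundedUnder (· ≤ ·) (atTop : Filter ℕ) u :=
    ⟨(E:ℝ) * e * p, eventually_map.2 (eventually_atTop.2 ⟨1, hup⟩)⟩
  have hbddBelow : IsBoundedUnder (· ≥ ·) (atTop : Filter ℕ) u :=
    ⟨0, eventually_map.2 (Eventually.of_forall hposu)⟩
  have hge : (E:ℝ) * e ≤ liminf u atTop :=
    le_liminf_of_le hbddAbove.isCoboundedUnder_ge (eventually_atTop.2 ⟨1, hlow⟩)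
  -- the subsequence
  set φ : ℕ → ℕ := fun t => p ^ t / e with hφ
  have hφtend : Tendsto φ atTop atTop := by
    rw [tendsto_atTop]
    intro b
    exact ((tendsto_pow_atTop_atTop_of_one_lt hp).eventually_ge_atTop (b*e)).mono
      fun t ht => (Nat.le_div_iff_mul_le he).2 ht
  have hKey : ∀ᶠ t in atTop, 1 ≤ φ t ∧ Kf (φ t) = t := by
    have hev1 : ∀ᶠ t in atTop, e ≤ p ^ (t-1) :=
      ((tendsto_pow_atTop_atTop_of_one_lt hp).comp
        (tendsto_sub_atTop_nat 1)).eventually_ge_atTop e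
    filter_upwards [hev1, eventually_ge_atTop 1] with t ht1 ht2
    have he_le : e ≤ p ^ t := ht1.trans (Nat.pow_le_pow_right (by omega) (by omega))
    have hφ1 : 1 ≤ φ t := (Nat.one_le_div_iff he).2 he_le
    have hfl : φ t * e ≤ p ^ t := Nat.div_mul_le_self _ _
    have hflt : p ^ t < φ t * e + e := Nat.lt_div_mul_add he
    refine ⟨hφ1, ?_⟩
    have hle1 : Kf (φ t) ≤ t := hKmin _ t hfl
    have hge1 : t ≤ Kf (φ t) := by
      by_contra hgt
      push_neg at hgt
      have hit : Kf (φ t) ≤ t - 1 := by omega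
      have h2 : p ^ Kf (φ t) ≤ p ^ (t-1) := Nat.pow_le_pow_right (by omega) hit
      have h3 : φ t * e ≤ p ^ (t-1) := (hKn (φ t)).trans h2
      have h4 : p ^ t = p ^ (t-1) * p := by
        rw [← pow_succ, Nat.sub_add_cancel ht2]
      have h5 : p ^ (t-1) * 2 ≤ p ^ (t-1) * p := Nat.mul_le_mul_left _ hp
      omega
    omega
  have hsubR : Tendsto (fun t : ℕ => (p:ℝ)^t - e) atTop atTop := by
    have := tendsto_atTop_add_const_right atTop (-(e:ℝ))
      (tendsto_pow_atTop_atTop_of_one_lt (by exact_mod_cast hp : (1:ℝ) < p))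
    simpa [sub_eq_add_neg] using this
  have hg : Tendsto (fun t : ℕ => ((E:ℝ) * e) * ((p:ℝ)^t / ((p:ℝ)^t - e))) atTop
      (𝓝 ((E:ℝ) * e)) := by
    have h1 : Tendsto (fun t : ℕ => ((p:ℝ)^t - e)⁻¹) atTop (𝓝 0) := hsubR.inv_tendsto_atTop
    have h2 : Tendsto (fun t : ℕ => 1 + (e:ℝ) * ((p:ℝ)^t - e)⁻¹) atTop (𝓝 (1 + (e:ℝ) * 0)) :=
      tendsto_const_nhds.add (tendsto_const_nhds.mul h1)
    rw [mul_zero, add_zero] at h2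
    have h3 : Tendsto (fun t : ℕ => ((E:ℝ)*e) * (1 + (e:ℝ) * ((p:ℝ)^t - e)⁻¹)) atTop
        (𝓝 (((E:ℝ)*e) * 1)) := tendsto_const_nhds.mul h2
    rw [mul_one] at h3
    apply h3.congr'
    filter_upwards [hsubR.eventually_gt_atTop 0] with t htpos
    congr 1
    field_simp
    ring
  have huφ : ∀ᶠ t in atTop, u (φ t) = (E:ℝ) * (p:ℝ)^t / (φ t : ℝ) := by
    filter_upwards [hKey] with t ⟨ht1, ht2⟩
    rw [hu]
    simp only
    rw [hs (φ t) ht1, show sInf {i : ℕ | φ t * e ≤ p ^ i} = Kf (φ t) from rfl, ht2]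
    push_cast
    ring
  have hlb2 : ∀ᶠ t in atTop, (E:ℝ) * e ≤ u (φ t) := by
    filter_upwards [hKey] with t ⟨ht1, _⟩
    exact hlow _ ht1
  have hub2 : ∀ᶠ t in atTop,
      u (φ t) ≤ ((E:ℝ) * e) * ((p:ℝ)^t / ((p:ℝ)^t - e)) := by
    filter_upwards [huφ, hKey, hsubR.eventually_gt_atTop 0] with t hteq ⟨ht1, _⟩ htpos
    rw [hteq]
    have hφpos : (0:ℝ) < (φ t : ℝ) := by exact_mod_cast ht1
    have hflt : (p:ℝ) ^ t < (φ t : ℝ) * e + e := by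
      have : (p:ℕ) ^ t < (φ t) * e + e := Nat.lt_div_mul_add he
      exact_mod_cast this
    rw [div_le_iff₀ hφpos]
    have h6 : ((E:ℝ)*e) * ((p:ℝ)^t/((p:ℝ)^t - e)) * (φ t : ℝ)
        = ((E:ℝ)*e*(φ t:ℝ)*(p:ℝ)^t) / ((p:ℝ)^t - e) := by ring
    rw [h6, le_div_iff₀ htpos]
    have hEp : (0:ℝ) ≤ (E:ℝ) * (p:ℝ)^t := by positivity
    have hkey2 : (p:ℝ)^t - e ≤ (e:ℝ)*(φ t) := by nlinarith
    nlinarith [mul_le_mul_of_nonneg_left hkey2 hEp]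
  have htendw : Tendsto (fun t => u (φ t)) atTop (𝓝 ((E:ℝ) * e)) :=
    tendsto_of_tendsto_of_tendsto_of_le_of_le' tendsto_const_nhds hg hlb2 hub2
  have hle : liminf u atTop ≤ (E:ℝ) * e := by
    apply le_of_forall_pos_le_add
    intro ε hε
    apply liminf_le_of_frequently_le _ hbddBelow
    rw [frequently_atTop]
    intro N
    obtain ⟨t, ht1, ht2⟩ :=
      ((htendw.eventually_lt_const (lt_add_of_pos_right _ hε)).and
        (hφtend.eventually_ge_atTop N)).exists
    exact ⟨φ t, ht2, ht1.le⟩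
  exact le_antisymm hle hge


theorem sDeg_qLin_formula (p : ℕ) [Fact p.Prime] (F : Type*) [Field F] [Fintype F]
    [CharP F p] (f f₀ : Polynomial F) (e : ℕ)
    (hfdeg : 0 < f.natDegree) (hfX : ¬ Polynomial.X ∣ f)
    (hf₀monic : f₀.Monic) (hf₀sf : Squarefree f₀) (hf₀dvd : f₀ ∣ f)
    (hf₀rad : ∀ g : Polynomial F, Prime g → g ∣ f → g ∣ f₀)
    (he : 0 < e) (hfe : f ∣ f₀ ^ e) (hemin : ∀ m : ℕ, 0 < m → f ∣ f₀ ^ m → e ≤ m) :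
    (∀ n : ℕ, 1 ≤ n →
      sDeg (qLin f) n = polyOrd f₀ * p ^ sInf {i : ℕ | n * e ≤ p ^ i}) ∧
    Filter.liminf (fun n : ℕ => (sDeg (qLin f) n : ℝ) / n) Filter.atTop =
      (polyOrd f₀ : ℝ) * e := by
  classical
  have hp1 : 1 < p := (Fact.out : p.Prime).one_lt
  have hf0 : f.coeff 0 ≠ 0 := fun h => hfX (Polynomial.X_dvd_iff.2 h)
  have hf₀0 : f₀.coeff 0 ≠ 0 := fun h =>
    hfX ((Polynomial.X_dvd_iff.2 h).trans hf₀dvd)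
  have hEpos := (polyOrd_spec p F f₀ hf₀monic hf₀0).1
  have part1 : ∀ n : ℕ, 1 ≤ n →
      sDeg (qLin f) n = polyOrd f₀ * p ^ sInf {i : ℕ | n * e ≤ p ^ i} := by
    intro n hn
    show sInf {j : ℕ | 0 < j ∧ SplitsIn (polyIter (qLin f) n) j}
        = polyOrd f₀ * p ^ sInf {i : ℕ | n * e ≤ p ^ i}
    exact key_formula p F f f₀ e hfdeg hfX hf₀monic hf₀sf hf₀dvd hf₀rad he hfe hemin n hn
  refine ⟨part1, ?_⟩
  exact liminf_formula p e (polyOrd f₀) hp1 he hEpos (fun n => sDeg (qLin f) n) part1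
end

section
/- Let A ∈ F_q[X] be an additive polynomial that is not of the form aX^{p^h} with a ∈ F_q and h ≥ 0, fix b ∈ F_q, and set B(X) = A(X) + b. Then there exist real numbers α_B, β_B > 0 such that α_B ≤ ρ_B(n)/n ≤ β_B for every integer n ≥ 1. -/
open Polynomial Filter

/-- The average of the degrees of the distinct monic irreducible factors of `P`. -/
noncomputable def avgFactorDeg {F : Type*} [Field F] (P : Polynomial F) : ℝ :=
  letI := Classical.decEq F
  letI := Classical.decEq (Polynomial F)
  (∑ g ∈ (UniqueFactorizationMonoid.normalizedFactors P).toFinset, (g.natDegree : ℝ)) /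
    ((UniqueFactorizationMonoid.normalizedFactors P).toFinset.card : ℝ)

set_option linter.unusedSectionVars false
set_option linter.unusedVariables false

section Aux

variable {p : ℕ} [Fact p.Prime] {F : Type*} [Field F] [Fintype F] [CharP F p]

lemma polyIter_zero (P : Polynomial F) : polyIter P 0 = Polynomial.X := rfl

lemma polyIter_succ (P : Polynomial F) (n : ℕ) :
    polyIter P (n + 1) = P.comp (polyIter P n) := by
  simp [polyIter, Function.iterate_succ_apply']

lemma polyIter_succ' (P : Polynomial F) (n : ℕ) :
    polyIter P (n + 1) = (polyIter P n).comp P := by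
  induction n with
  | zero => simp [polyIter_zero, polyIter_succ]
  | succ n ih =>
    calc polyIter P (n + 2) = P.comp (polyIter P (n + 1)) := polyIter_succ _ _
      _ = P.comp ((polyIter P n).comp P) := by rw [ih]
      _ = (P.comp (polyIter P n)).comp P := by rw [Polynomial.comp_assoc]
      _ = (polyIter P (n + 1)).comp P := by rw [← polyIter_succ]

lemma natDegree_polyIter (P : Polynomial F) (n : ℕ) :
    (polyIter P n).natDegree = P.natDegree ^ n := by
  induction n with
  | zero => simp [polyIter_zero]
  | succ n ih => rw [polyIter_succ, Polynomial.natDegree_comp, ih, pow_succ, mul_comm]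

/-- Frobenius `q^s` power commutes with evaluation of polys with coeffs in `F`. -/
lemma aeval_pow_card_pow {R : Type*} [CommRing R] [Algebra F R] [CharP R p]
    {e : ℕ} (hq : Fintype.card F = p ^ e) (s : ℕ) (Q : Polynomial F) (x : R) :
    (Polynomial.aeval x Q) ^ (Fintype.card F ^ s) =
      Polynomial.aeval (x ^ (Fintype.card F ^ s)) Q := by
  have hN : Fintype.card F ^ s = p ^ (e * s) := by rw [hq, ← pow_mul]
  have h1 : ∀ y : R, y ^ (Fintype.card F ^ s) = iterateFrobenius R p (e * s) y := by
    intro y; rw [iterateFrobenius_def, hN]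
  rw [h1, h1]
  rw [Polynomial.aeval_def, Polynomial.aeval_def, Polynomial.hom_eval₂]
  congr 1
  ext c
  simp only [RingHom.comp_apply, iterateFrobenius_def, ← map_pow, ← hN]
  rw [FiniteField.pow_card_pow]

lemma aeval_add_of_additive {R : Type*} [CommRing R] [Algebra F R] [CharP R p]
    {A : Polynomial F} (hA : IsAdditivePoly p A) (x y : R) :
    Polynomial.aeval (x + y) A = Polynomial.aeval x A + Polynomial.aeval y A := by
  rw [Polynomial.aeval_eq_sum_range, Polynomial.aeval_eq_sum_range,
    Polynomial.aeval_eq_sum_range, ← Finset.sum_add_distrib]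
  refine Finset.sum_congr rfl ?_
  intro i _
  rcases eq_or_ne (A.coeff i) 0 with h0 | h0
  · simp [h0]
  · obtain ⟨h, rfl⟩ := hA i h0
    rw [add_pow_char_pow, smul_add]

lemma aeval_sub_of_additive {R : Type*} [CommRing R] [Algebra F R] [CharP R p]
    {A : Polynomial F} (hA : IsAdditivePoly p A) (x y : R) :
    Polynomial.aeval (x - y) A = Polynomial.aeval x A - Polynomial.aeval y A := by
  have := aeval_add_of_additive (R := R) hA (x - y) y
  rw [sub_add_cancel] at this
  exact eq_sub_iff_add_eq.mpr this.symm

end Aux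

section FF

variable {p : ℕ} [Fact p.Prime] {F : Type*} [Field F] [Fintype F] [CharP F p]

lemma dvd_of_common_root {K : Type*} [Field K] [Algebra F K] {g W : Polynomial F}
    (hg : Irreducible g) {y : K} (h1 : Polynomial.aeval y g = 0)
    (h2 : Polynomial.aeval y W = 0) : g ∣ W := by
  by_contra hn
  obtain ⟨u, v, huv⟩ := hg.coprime_iff_not_dvd.mpr hn
  have := congrArg (Polynomial.aeval y) huv
  simp only [map_add, map_mul, h1, h2, mul_zero, map_one] at this
  simp at this

lemma card_adjoinRoot {g : Polynomial F} (hg : Irreducible g) :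
    ∃ _ : Fintype (AdjoinRoot g), Fintype.card (AdjoinRoot g) =
      Fintype.card F ^ g.natDegree := by
  haveI : Fact (Irreducible g) := ⟨hg⟩
  haveI : Module.Finite F (AdjoinRoot g) :=
    Module.Finite.of_basis (AdjoinRoot.powerBasis (f := g) hg.ne_zero).basis
  haveI : Finite (AdjoinRoot g) := Module.finite_of_finite F
  haveI : Fintype (AdjoinRoot g) := Fintype.ofFinite _
  refine ⟨inferInstance, ?_⟩
  rw [Module.card_eq_pow_finrank (K := F) (V := AdjoinRoot g),
    (AdjoinRoot.powerBasis (f := g) hg.ne_zero).finrank, AdjoinRoot.powerBasis_dim]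

lemma irreducible_dvd_X_pow_card {g : Polynomial F} (hg : Irreducible g) :
    g ∣ (Polynomial.X ^ (Fintype.card F ^ g.natDegree) - Polynomial.X) := by
  haveI : Fact (Irreducible g) := ⟨hg⟩
  obtain ⟨hF, hcard⟩ := card_adjoinRoot hg
  have hroot : (AdjoinRoot.root g) ^ (Fintype.card F ^ g.natDegree) = AdjoinRoot.root g := by
    rw [← hcard]; exact FiniteField.pow_card _
  rw [← AdjoinRoot.mk_eq_zero (f := g), ← AdjoinRoot.aeval_eq]
  rw [map_sub, Polynomial.aeval_X_pow, Polynomial.aeval_X, hroot, sub_self]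

lemma natDegree_le_of_dvd_X_pow_card {e : ℕ} (hq : Fintype.card F = p ^ e)
    {g : Polynomial F} (hg : Irreducible g) {S : ℕ} (hS : 1 ≤ S)
    (hdvd : g ∣ (Polynomial.X ^ (Fintype.card F ^ S) - Polynomial.X)) :
    g.natDegree ≤ S := by
  haveI : Fact (Irreducible g) := ⟨hg⟩
  obtain ⟨hF, hcard⟩ := card_adjoinRoot hg
  haveI : CharP (AdjoinRoot g) p :=
    charP_of_injective_algebraMap (algebraMap F (AdjoinRoot g)).injective p
  have hroot : (AdjoinRoot.root g) ^ (Fintype.card F ^ S) = AdjoinRoot.root g := by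
    have h0 : Polynomial.aeval (AdjoinRoot.root g)
        (Polynomial.X ^ (Fintype.card F ^ S) - Polynomial.X : Polynomial F) = 0 := by
      rw [AdjoinRoot.aeval_eq, AdjoinRoot.mk_eq_zero]; exact hdvd
    rw [map_sub, Polynomial.aeval_X_pow, Polynomial.aeval_X, sub_eq_zero] at h0
    exact h0
  have hall : ∀ z : AdjoinRoot g, z ^ (Fintype.card F ^ S) = z := by
    intro z
    obtain ⟨h, rfl⟩ := AdjoinRoot.mk_surjective z
    rw [← AdjoinRoot.aeval_eq, aeval_pow_card_pow hq, hroot]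
  -- every element of `AdjoinRoot g` is a root of `X^(q^S) - X`
  have hq2 : 1 < Fintype.card F := Fintype.one_lt_card
  have hne : (Polynomial.X ^ (Fintype.card F ^ S) - Polynomial.X :
      Polynomial (AdjoinRoot g)) ≠ 0 :=
    FiniteField.X_pow_card_pow_sub_X_ne_zero _ (by omega) hq2
  have hsub : Finset.univ ⊆ (Polynomial.X ^ (Fintype.card F ^ S) - Polynomial.X :
      Polynomial (AdjoinRoot g)).roots.toFinset := by
    intro z _
    rw [Multiset.mem_toFinset, Polynomial.mem_roots hne]
    simp [Polynomial.IsRoot, hall z, sub_eq_zero]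
  have hle := Finset.card_le_card hsub
  rw [Finset.card_univ, hcard] at hle
  have hle2 : (Polynomial.X ^ (Fintype.card F ^ S) - Polynomial.X :
      Polynomial (AdjoinRoot g)).roots.toFinset.card ≤ Fintype.card F ^ S := by
    refine le_trans (Multiset.toFinset_card_le _) ?_
    refine le_trans (Polynomial.card_roots' _) ?_
    refine le_trans (Polynomial.natDegree_sub_le _ _) ?_
    simp only [Polynomial.natDegree_X_pow, Polynomial.natDegree_X, max_le_iff]
    exact ⟨le_refl _, Nat.one_le_pow _ _ (by omega)⟩
  have := le_trans hle hle2
  exact (Nat.pow_le_pow_iff_right hq2).mp this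

end FF

section Clo

variable {p : ℕ} [Fact p.Prime] {F : Type*} [Field F] [Fintype F] [CharP F p]
variable [DecidableEq F] [DecidableEq (AlgebraicClosure F)] [DecidableEq (Polynomial F)]

lemma mem_rootsFinsetK {P : Polynomial F} (hP : P ≠ 0) {z : AlgebraicClosure F} :
    z ∈ (P.map (algebraMap F (AlgebraicClosure F))).roots.toFinset ↔
      Polynomial.aeval z P = 0 := by
  rw [Multiset.mem_toFinset, Polynomial.mem_roots (Polynomial.map_ne_zero hP),
    Polynomial.IsRoot.def, Polynomial.eval_map, ← Polynomial.aeval_def]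

open UniqueFactorizationMonoid in
lemma sum_natDegree_normalizedFactors (P : Polynomial F) (hP : P ≠ 0) :
    ∑ g ∈ (UniqueFactorizationMonoid.normalizedFactors P).toFinset, g.natDegree
      = (P.map (algebraMap F (AlgebraicClosure F))).roots.toFinset.card := by
  have hirr : ∀ g ∈ (normalizedFactors P).toFinset, Irreducible g := fun g hg =>
    irreducible_of_normalized_factor g (Multiset.mem_toFinset.mp hg)
  have hne0 : ∀ g ∈ (normalizedFactors P).toFinset, g ≠ 0 := fun g hg => (hirr g hg).ne_zero
  have hmem : ∀ y : AlgebraicClosure F, Polynomial.aeval y P = 0 ↔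
      ∃ g ∈ normalizedFactors P, Polynomial.aeval y g = 0 := by
    intro y
    obtain ⟨u, hu⟩ := UniqueFactorizationMonoid.prod_normalizedFactors hP
    have hu0 : Polynomial.aeval y (u : Polynomial F) ≠ 0 := by
      obtain ⟨c, hc, hcu⟩ := Polynomial.isUnit_iff.mp u.isUnit
      rw [← hcu, Polynomial.aeval_C]
      exact fun h => hc.ne_zero ((_root_.map_eq_zero (algebraMap F (AlgebraicClosure F))).mp h)
    have hPy : Polynomial.aeval y P = Polynomial.aeval y (normalizedFactors P).prod *
        Polynomial.aeval y (u : Polynomial F) := by rw [← map_mul, hu]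
    rw [hPy, mul_eq_zero]
    have hprod : Polynomial.aeval y (normalizedFactors P).prod =
        ((normalizedFactors P).map (Polynomial.aeval y)).prod := map_multiset_prod _ _
    simp only [hu0, or_false]
    rw [hprod, Multiset.prod_eq_zero_iff]
    constructor
    · intro h
      obtain ⟨g, hg, h0⟩ := Multiset.mem_map.mp h
      exact ⟨g, hg, h0⟩
    · rintro ⟨g, hg, hg0⟩
      rw [← hg0]
      exact Multiset.mem_map_of_mem _ hg
  have hroots_eq : (P.map (algebraMap F (AlgebraicClosure F))).roots.toFinset =
      (normalizedFactors P).toFinset.biUnion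
        (fun g => (g.map (algebraMap F (AlgebraicClosure F))).roots.toFinset) := by
    ext y
    rw [mem_rootsFinsetK hP, Finset.mem_biUnion, hmem y]
    constructor
    · rintro ⟨g, hg, hg0⟩
      exact ⟨g, Multiset.mem_toFinset.mpr hg, (mem_rootsFinsetK
        (hne0 g (Multiset.mem_toFinset.mpr hg))).mpr hg0⟩
    · rintro ⟨g, hg, hy⟩
      exact ⟨g, Multiset.mem_toFinset.mp hg, (mem_rootsFinsetK (hne0 g hg)).mp hy⟩
  have hdisj : ∀ g ∈ (normalizedFactors P).toFinset, ∀ g' ∈ (normalizedFactors P).toFinset,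
      g ≠ g' → Disjoint ((g.map (algebraMap F (AlgebraicClosure F))).roots.toFinset)
        ((g'.map (algebraMap F (AlgebraicClosure F))).roots.toFinset) := by
    intro g hg g' hg' hne
    rw [Finset.disjoint_left]
    intro y hy hy'
    have h1 := (mem_rootsFinsetK (hne0 g hg)).mp hy
    have h2 := (mem_rootsFinsetK (hne0 g' hg')).mp hy'
    have hdvd : g ∣ g' := dvd_of_common_root (hirr g hg) h1 h2
    have hass : Associated g g' := (hirr g hg).associated_of_dvd (hirr g' hg') hdvd
    apply hne
    rw [← normalize_normalized_factor g (Multiset.mem_toFinset.mp hg),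
      ← normalize_normalized_factor g' (Multiset.mem_toFinset.mp hg'),
      normalize_eq_normalize hass.dvd hass.symm.dvd]
  rw [hroots_eq, Finset.card_biUnion hdisj]
  refine Finset.sum_congr rfl ?_
  intro g hg
  have hsep : g.Separable := PerfectField.separable_of_irreducible (hirr g hg)
  have hnodup := Polynomial.nodup_roots (hsep.map (f := algebraMap F (AlgebraicClosure F)))
  rw [Multiset.toFinset_card_of_nodup hnodup,
    ← Polynomial.Splits.natDegree_eq_card_roots (IsAlgClosed.splits _), Polynomial.natDegree_map]

end Clo

section Main

variable {p : ℕ} [Fact p.Prime] {F : Type*} [Field F] [Fintype F] [CharP F p]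
variable [DecidableEq F] [DecidableEq (AlgebraicClosure F)] [DecidableEq (Polynomial F)]
variable {A : Polynomial F}

lemma addpoly_ne_zero (hexc : ¬ ∃ (a : F) (h : ℕ), A = Polynomial.C a * Polynomial.X ^ p ^ h) :
    A ≠ 0 := by
  intro h
  exact hexc ⟨0, 0, by simp [h]⟩

lemma addpoly_coeff_zero (hA : IsAdditivePoly p A) : A.coeff 0 = 0 := by
  by_contra h
  obtain ⟨k, hk⟩ := hA 0 h
  have := pow_pos (Nat.Prime.pos (Fact.out : p.Prime)) k
  omega

lemma addpoly_natDegree_pos (hA : IsAdditivePoly p A)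
    (hexc : ¬ ∃ (a : F) (h : ℕ), A = Polynomial.C a * Polynomial.X ^ p ^ h) :
    1 ≤ A.natDegree := by
  by_contra h
  push_neg at h
  interval_cases hd : A.natDegree
  have := Polynomial.eq_C_of_natDegree_eq_zero hd
  rw [addpoly_coeff_zero hA, map_zero] at this
  exact addpoly_ne_zero hexc this

lemma addpoly_exists_nonzero_root (hA : IsAdditivePoly p A)
    (hexc : ¬ ∃ (a : F) (h : ℕ), A = Polynomial.C a * Polynomial.X ^ p ^ h) :
    ∃ w : AlgebraicClosure F, Polynomial.aeval w A = 0 ∧ w ≠ 0 := by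
  by_contra hall
  push_neg at hall
  set K := AlgebraicClosure F
  set ι := algebraMap F K
  have hA0 : A ≠ 0 := addpoly_ne_zero hexc
  have hsplit : Polynomial.Splits (A.map ι) :=
    IsAlgClosed.splits _
  have hprod := hsplit.eq_prod_roots
  have hzero : ∀ y ∈ (A.map ι).roots, y = 0 := by
    intro y hy
    have := (mem_rootsFinsetK hA0).mp (Multiset.mem_toFinset.mpr hy)
    exact hall y this
  have hrep : (A.map ι).roots = Multiset.replicate (Multiset.card (A.map ι).roots) 0 :=
    Multiset.eq_replicate.mpr ⟨rfl, hzero⟩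
  have hcard : Multiset.card (A.map ι).roots = A.natDegree := by
    rw [← hsplit.natDegree_eq_card_roots, Polynomial.natDegree_map]
  have hmap : A.map ι = Polynomial.C ((A.map ι).leadingCoeff) * Polynomial.X ^ A.natDegree := by
    conv_lhs => rw [hprod, hrep, hcard]
    congr 1
    rw [Multiset.map_replicate, Multiset.prod_replicate, map_zero, sub_zero]
  have hAC : A = Polynomial.C A.leadingCoeff * Polynomial.X ^ A.natDegree := by
    apply Polynomial.map_injective ι (algebraMap F K).injective
    rw [hmap]
    simp [Polynomial.leadingCoeff_map_of_injective (by simpa using (algebraMap F K).injective)]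
  have hlc : A.coeff A.natDegree ≠ 0 := by
    rw [← Polynomial.leadingCoeff]
    exact Polynomial.leadingCoeff_ne_zero.mpr hA0
  obtain ⟨k, hk⟩ := hA A.natDegree hlc
  exact hexc ⟨A.leadingCoeff, k, by rw [← hk]; exact hAC⟩

end Main

section Main2

variable {p : ℕ} [Fact p.Prime] {F : Type*} [Field F] [Fintype F] [CharP F p]
variable [DecidableEq F] [DecidableEq (AlgebraicClosure F)] [DecidableEq (Polynomial F)]
variable {A : Polynomial F}

/-- The finset of roots in the algebraic closure. -/
noncomputable def rootsK (P : Polynomial F) [DecidableEq (AlgebraicClosure F)] :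
    Finset (AlgebraicClosure F) :=
  (P.map (algebraMap F (AlgebraicClosure F))).roots.toFinset

lemma mem_rootsK {P : Polynomial F} (hP : P ≠ 0) {z : AlgebraicClosure F} :
    z ∈ rootsK P ↔ Polynomial.aeval z P = 0 := mem_rootsFinsetK hP

lemma aeval_zero_of_additive {R : Type*} [CommRing R] [Algebra F R] [CharP R p]
    (hA : IsAdditivePoly p A) : Polynomial.aeval (0 : R) A = 0 := by
  have := aeval_add_of_additive (R := R) hA 0 0
  rw [add_zero] at this
  exact add_eq_right.mp this.symm

lemma aeval_nsmul_of_additive {R : Type*} [CommRing R] [Algebra F R] [CharP R p]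
    (hA : IsAdditivePoly p A) (k : ℕ) (x : R) :
    Polynomial.aeval ((k : R) * x) A = (k : R) * Polynomial.aeval x A := by
  induction k with
  | zero => simpa using aeval_zero_of_additive hA
  | succ k ih =>
    push_cast
    rw [add_mul, one_mul, add_mul, one_mul, aeval_add_of_additive hA, ih]

lemma card_le_card_rootsK (hA : IsAdditivePoly p A)
    (hexc : ¬ ∃ (a : F) (h : ℕ), A = Polynomial.C a * Polynomial.X ^ p ^ h) :
    p ≤ (rootsK A).card := by
  obtain ⟨w, hw, hw0⟩ := addpoly_exists_nonzero_root hA hexc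
  have hA0 : A ≠ 0 := addpoly_ne_zero hexc
  haveI : NeZero p := ⟨(Fact.out : p.Prime).ne_zero⟩
  have hinj : Function.Injective
      (fun c : ZMod p => (ZMod.castHom (dvd_refl p) (AlgebraicClosure F) c) * w) := by
    intro c c' h
    simp only [] at h
    exact ZMod.castHom_injective (AlgebraicClosure F) (mul_right_cancel₀ hw0 h)
  have hsub : Finset.univ.image
      (fun c : ZMod p => (ZMod.castHom (dvd_refl p) (AlgebraicClosure F) c) * w)
      ⊆ rootsK A := by
    intro z hz
    obtain ⟨c, _, rfl⟩ := Finset.mem_image.mp hz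
    rw [mem_rootsK hA0, ZMod.castHom_apply, ← ZMod.natCast_val,
      aeval_nsmul_of_additive hA, hw, mul_zero]
  have := Finset.card_le_card hsub
  rwa [Finset.card_image_of_injective _ hinj, Finset.card_univ, ZMod.card] at this

end Main2

section Main3

variable {p : ℕ} [Fact p.Prime] {F : Type*} [Field F] [Fintype F] [CharP F p]
variable [DecidableEq F] [DecidableEq (AlgebraicClosure F)] [DecidableEq (Polynomial F)]
variable {A : Polynomial F} {b : F}

lemma natDegree_B (hA : IsAdditivePoly p A)
    (hexc : ¬ ∃ (a : F) (h : ℕ), A = Polynomial.C a * Polynomial.X ^ p ^ h) :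
    1 ≤ (A + Polynomial.C b).natDegree := by
  rw [Polynomial.natDegree_add_C]
  exact addpoly_natDegree_pos hA hexc

lemma polyIter_B_ne_zero (hA : IsAdditivePoly p A)
    (hexc : ¬ ∃ (a : F) (h : ℕ), A = Polynomial.C a * Polynomial.X ^ p ^ h) (n : ℕ) :
    polyIter (A + Polynomial.C b) n ≠ 0 := by
  apply Polynomial.ne_zero_of_natDegree_gt (n := 0)
  rw [natDegree_polyIter]
  exact Nat.one_le_pow _ _ (natDegree_B hA hexc)

lemma mem_fiberB (hA : IsAdditivePoly p A)
    (hexc : ¬ ∃ (a : F) (h : ℕ), A = Polynomial.C a * Polynomial.X ^ p ^ h)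
    (t : AlgebraicClosure F) {y : AlgebraicClosure F} :
    y ∈ (((A + Polynomial.C b).map (algebraMap F (AlgebraicClosure F))
        - Polynomial.C t).roots).toFinset ↔ Polynomial.aeval y (A + Polynomial.C b) = t := by
  have hne : ((A + Polynomial.C b).map (algebraMap F (AlgebraicClosure F))
      - Polynomial.C t) ≠ 0 := by
    apply Polynomial.ne_zero_of_natDegree_gt (n := 0)
    rw [Polynomial.natDegree_sub_C,
      Polynomial.natDegree_map_eq_of_injective (algebraMap F (AlgebraicClosure F)).injective]
    exact natDegree_B hA hexc
  rw [Multiset.mem_toFinset, Polynomial.mem_roots hne, Polynomial.IsRoot.def,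
    Polynomial.eval_sub, Polynomial.eval_C, Polynomial.eval_map, ← Polynomial.aeval_def,
    sub_eq_zero]

lemma card_fiberB (hA : IsAdditivePoly p A)
    (hexc : ¬ ∃ (a : F) (h : ℕ), A = Polynomial.C a * Polynomial.X ^ p ^ h)
    (t : AlgebraicClosure F) :
    ((((A + Polynomial.C b).map (algebraMap F (AlgebraicClosure F))
        - Polynomial.C t).roots).toFinset).card = (rootsK A).card := by
  have hA0 : A ≠ 0 := addpoly_ne_zero hexc
  -- there is a point in the fiber
  have hdeg : ((A + Polynomial.C b).map (algebraMap F (AlgebraicClosure F))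
      - Polynomial.C t).degree ≠ 0 := by
    have h1 : 0 < ((A + Polynomial.C b).map (algebraMap F (AlgebraicClosure F))
        - Polynomial.C t).natDegree := by
      rw [Polynomial.natDegree_sub_C,
        Polynomial.natDegree_map_eq_of_injective (algebraMap F (AlgebraicClosure F)).injective]
      exact natDegree_B hA hexc
    have := Polynomial.natDegree_pos_iff_degree_pos.mp h1
    exact ne_of_gt this
  obtain ⟨y₀, hy₀⟩ := IsAlgClosed.exists_root _ hdeg
  have hy₀' : Polynomial.aeval y₀ (A + Polynomial.C b) = t := by
    have := hy₀
    rw [Polynomial.IsRoot.def, Polynomial.eval_sub, Polynomial.eval_C,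
      Polynomial.eval_map, ← Polynomial.aeval_def, sub_eq_zero] at this
    exact this
  have himg : (((A + Polynomial.C b).map (algebraMap F (AlgebraicClosure F))
      - Polynomial.C t).roots).toFinset = (rootsK A).image (· + y₀) := by
    ext z
    rw [mem_fiberB hA hexc t, Finset.mem_image]
    constructor
    · intro hz
      refine ⟨z - y₀, ?_, by ring⟩
      rw [mem_rootsK hA0]
      have h1 : Polynomial.aeval (z - y₀) A
          = Polynomial.aeval z A - Polynomial.aeval y₀ A := aeval_sub_of_additive hA z y₀
      have h2 : Polynomial.aeval z (A + Polynomial.C b)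
          = Polynomial.aeval z A + algebraMap F (AlgebraicClosure F) b := by
        rw [map_add, Polynomial.aeval_C]
      have h3 : Polynomial.aeval y₀ (A + Polynomial.C b)
          = Polynomial.aeval y₀ A + algebraMap F (AlgebraicClosure F) b := by
        rw [map_add, Polynomial.aeval_C]
      rw [h2] at hz
      rw [h3] at hy₀'
      rw [h1]
      rw [← hz] at hy₀'
      linear_combination hy₀'.symm
    · rintro ⟨w, hw, rfl⟩
      rw [mem_rootsK hA0] at hw
      rw [map_add, Polynomial.aeval_C, aeval_add_of_additive hA, hw, zero_add]
      rw [map_add, Polynomial.aeval_C] at hy₀'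
      exact hy₀'
  rw [himg, Finset.card_image_of_injective _ (add_left_injective y₀)]

lemma card_rootsK_polyIter (hA : IsAdditivePoly p A)
    (hexc : ¬ ∃ (a : F) (h : ℕ), A = Polynomial.C a * Polynomial.X ^ p ^ h) (n : ℕ) :
    (rootsK (polyIter (A + Polynomial.C b) n)).card = (rootsK A).card ^ n := by
  induction n with
  | zero =>
    rw [pow_zero, polyIter_zero]
    rw [show rootsK (Polynomial.X : Polynomial F) = {0} from ?_]
    · exact Finset.card_singleton 0
    · ext z
      rw [mem_rootsK Polynomial.X_ne_zero, Finset.mem_singleton, Polynomial.aeval_X]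
  | succ n ih =>
    have hstep : rootsK (polyIter (A + Polynomial.C b) (n + 1)) =
        (rootsK (polyIter (A + Polynomial.C b) n)).biUnion
          (fun t => (((A + Polynomial.C b).map (algebraMap F (AlgebraicClosure F))
            - Polynomial.C t).roots).toFinset) := by
      ext y
      rw [mem_rootsK (polyIter_B_ne_zero hA hexc (n+1)), Finset.mem_biUnion]
      rw [polyIter_succ', Polynomial.aeval_comp]
      constructor
      · intro h
        exact ⟨Polynomial.aeval y (A + Polynomial.C b),
          (mem_rootsK (polyIter_B_ne_zero hA hexc n)).mpr h, (mem_fiberB hA hexc _).mpr rfl⟩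
      · rintro ⟨t, ht, hy⟩
        rw [(mem_fiberB hA hexc t).mp hy]
        exact (mem_rootsK (polyIter_B_ne_zero hA hexc n)).mp ht
    have hdisj : ∀ t ∈ rootsK (polyIter (A + Polynomial.C b) n),
        ∀ t' ∈ rootsK (polyIter (A + Polynomial.C b) n), t ≠ t' →
        Disjoint ((((A + Polynomial.C b).map (algebraMap F (AlgebraicClosure F))
            - Polynomial.C t).roots).toFinset)
          ((((A + Polynomial.C b).map (algebraMap F (AlgebraicClosure F))
            - Polynomial.C t').roots).toFinset) := by
      intro t _ t' _ hne
      rw [Finset.disjoint_left]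
      intro y hy hy'
      rw [mem_fiberB hA hexc t] at hy
      rw [mem_fiberB hA hexc t'] at hy'
      exact hne (hy ▸ hy')
    rw [hstep, Finset.card_biUnion hdisj]
    rw [Finset.sum_congr rfl (fun t _ => card_fiberB hA hexc t), Finset.sum_const, ih,
      smul_eq_mul, pow_succ, mul_comm]

end Main3

section Delta

variable {p : ℕ} [Fact p.Prime] {F : Type*} [Field F] [Fintype F] [CharP F p]
variable {A : Polynomial F} {b : F}

/-- `z ↦ z^(q^s) - z` on the algebraic closure. -/
noncomputable def deltaF (F : Type*) [Field F] [Fintype F] (s : ℕ) :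
    AlgebraicClosure F → AlgebraicClosure F :=
  fun z => z ^ (Fintype.card F ^ s) - z

variable {e s : ℕ}

lemma deltaF_add (hq : Fintype.card F = p ^ e) (u v : AlgebraicClosure F) :
    deltaF F s (u + v) = deltaF F s u + deltaF F s v := by
  unfold deltaF
  rw [hq, ← pow_mul, add_pow_char_pow]
  ring

lemma deltaF_sub (hq : Fintype.card F = p ^ e) (u v : AlgebraicClosure F) :
    deltaF F s (u - v) = deltaF F s u - deltaF F s v := by
  unfold deltaF
  rw [hq, ← pow_mul, sub_pow_char_pow]
  ring

lemma deltaF_zero : deltaF F s 0 = 0 := by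
  simp [deltaF, pow_pos, zero_pow (pow_ne_zero s Fintype.card_ne_zero)]

lemma deltaF_algebraMap (c : F) : deltaF F s (algebraMap F (AlgebraicClosure F) c) = 0 := by
  unfold deltaF
  rw [← map_pow, FiniteField.pow_card_pow, sub_self]

lemma deltaF_iterate_zero (m : ℕ) : (deltaF F s)^[m] 0 = 0 :=
  Function.iterate_fixed deltaF_zero m

lemma deltaF_iterate_sub (hq : Fintype.card F = p ^ e) (m : ℕ) (u v : AlgebraicClosure F) :
    (deltaF F s)^[m] (u - v) = (deltaF F s)^[m] u - (deltaF F s)^[m] v := by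
  induction m generalizing u v with
  | zero => simp
  | succ m ih => rw [Function.iterate_succ_apply, Function.iterate_succ_apply,
      Function.iterate_succ_apply, deltaF_sub hq, ih]

lemma deltaF_aeval (hq : Fintype.card F = p ^ e) (hA : IsAdditivePoly p A)
    (w : AlgebraicClosure F) :
    Polynomial.aeval (deltaF F s w) A = deltaF F s (Polynomial.aeval w A) := by
  unfold deltaF
  rw [aeval_sub_of_additive hA, aeval_pow_card_pow hq]

lemma deltaF_iterate_aeval (hq : Fintype.card F = p ^ e) (hA : IsAdditivePoly p A)
    (m : ℕ) (w : AlgebraicClosure F) :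
    Polynomial.aeval ((deltaF F s)^[m] w) A = (deltaF F s)^[m] (Polynomial.aeval w A) := by
  induction m generalizing w with
  | zero => simp
  | succ m ih => rw [Function.iterate_succ_apply, Function.iterate_succ_apply,
      ih (deltaF F s w), deltaF_aeval hq hA]

lemma deltaF_iterate_root (hq : Fintype.card F = p ^ e) (hA : IsAdditivePoly p A)
    (hs : ∀ y : AlgebraicClosure F, Polynomial.aeval y A = 0 →
      y ^ Fintype.card F ^ s = y) :
    ∀ n, ∀ y : AlgebraicClosure F, Polynomial.aeval y (polyIter (A + Polynomial.C b) n) = 0 →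
      (deltaF F s)^[n + 1] y = 0 := by
  intro n
  induction n with
  | zero =>
    intro y hy
    rw [polyIter_zero, Polynomial.aeval_X] at hy
    rw [hy, Function.iterate_one, deltaF_zero]
  | succ n ih =>
    intro y hy
    rw [polyIter_succ', Polynomial.aeval_comp] at hy
    set z := Polynomial.aeval y (A + Polynomial.C b) with hz
    have hIH : (deltaF F s)^[n + 1] z = 0 := ih z hy
    have hAy : Polynomial.aeval y A = z - algebraMap F (AlgebraicClosure F) b := by
      rw [hz, map_add, Polynomial.aeval_C]; ring
    have h1 : Polynomial.aeval ((deltaF F s)^[n + 1] y) A = 0 := by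
      rw [deltaF_iterate_aeval hq hA, hAy, deltaF_iterate_sub hq, hIH,
        Function.iterate_succ_apply, deltaF_algebraMap, deltaF_iterate_zero, sub_self]
    have h2 := hs _ h1
    rw [Function.iterate_succ_apply']
    have h3 : deltaF F s ((deltaF F s)^[n + 1] y) =
        ((deltaF F s)^[n + 1] y) ^ Fintype.card F ^ s - (deltaF F s)^[n + 1] y := rfl
    rw [h3, h2, sub_self]

lemma charP_addMonoidEnd : CharP (AddMonoid.End (AlgebraicClosure F)) p := by
  constructor
  intro a
  rw [← CharP.cast_eq_zero_iff (AlgebraicClosure F) p a]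
  constructor
  · intro h
    have := DFunLike.congr_fun h (1 : AlgebraicClosure F)
    rw [AddMonoid.End.natCast_apply, nsmul_eq_mul, mul_one] at this
    simpa using this
  · intro h
    refine DFunLike.ext _ _ fun x => ?_
    rw [AddMonoid.End.natCast_apply, nsmul_eq_mul, h, zero_mul]
    rfl

lemma pow_fix_of_deltaF_iter (hq : Fintype.card F = p ^ e) {m k : ℕ} (hk : m ≤ p ^ k)
    {y : AlgebraicClosure F} (h : (deltaF F s)^[m] y = 0) :
    y ^ Fintype.card F ^ (s * p ^ k) = y := by
  haveI := charP_addMonoidEnd (p := p) (F := F)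
  set ψ : AddMonoid.End (AlgebraicClosure F) :=
    (iterateFrobenius (AlgebraicClosure F) p (e * s)).toAddMonoidHom with hψdef
  have hψ : ∀ x : AlgebraicClosure F, ψ x = x ^ Fintype.card F ^ s := by
    intro x
    show iterateFrobenius (AlgebraicClosure F) p (e * s) x = _
    rw [iterateFrobenius_def, hq, ← pow_mul]
  have hfun : ⇑(ψ - 1) = deltaF F s := by
    funext x
    have hsub : (ψ - 1) x = ψ x - (1 : AddMonoid.End (AlgebraicClosure F)) x := rfl
    rw [hsub, hψ, AddMonoid.End.one_apply]
    rfl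
  have hiter : ∀ j : ℕ, ⇑((ψ - 1) ^ j) = (deltaF F s)^[j] := by
    intro j
    rw [AddMonoid.End.coe_pow, hfun]
  have hψpow : ∀ (j : ℕ) (x : AlgebraicClosure F),
      (ψ ^ j) x = x ^ (Fintype.card F ^ s) ^ j := by
    intro j
    induction j with
    | zero => intro x; simp
    | succ j ih =>
      intro x
      rw [pow_succ, AddMonoid.End.coe_mul, Function.comp_apply, hψ, ih, ← pow_mul, ← pow_succ']
  have hbinom : (ψ - 1) ^ p ^ k = ψ ^ p ^ k - 1 := by
    rw [sub_pow_char_pow_of_commute p k (Commute.one_right ψ), one_pow]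
  have hzero : ((ψ - 1) ^ p ^ k) y = 0 := by
    have hpk : p ^ k = (p ^ k - m) + m := (Nat.sub_add_cancel hk).symm
    rw [hpk, pow_add, AddMonoid.End.coe_mul, Function.comp_apply, hiter m, h, hiter,
      deltaF_iterate_zero]
  rw [hbinom] at hzero
  have hsub : (ψ ^ p ^ k - 1) y = (ψ ^ p ^ k) y - (1 : AddMonoid.End (AlgebraicClosure F)) y :=
    rfl
  rw [hsub, hψpow, AddMonoid.End.one_apply, sub_eq_zero, ← pow_mul] at hzero
  exact hzero

end Delta

section S1

variable {p : ℕ} [Fact p.Prime] {F : Type*} [Field F] [Fintype F] [CharP F p]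
variable [DecidableEq F] [DecidableEq (AlgebraicClosure F)] [DecidableEq (Polynomial F)]
variable {A : Polynomial F} {b : F}

lemma pow_card_fix_mul {y : AlgebraicClosure F} {t : ℕ} (h : y ^ Fintype.card F ^ t = y)
    (c : ℕ) : y ^ Fintype.card F ^ (t * c) = y := by
  induction c with
  | zero => simp
  | succ c ih =>
    rw [Nat.mul_succ, pow_add, pow_mul, ih]
    exact h

lemma root_pow_card_of_dvd {g W : Polynomial F} (hdvd : g ∣ W)
    {y : AlgebraicClosure F} (hy : Polynomial.aeval y g = 0) :
    Polynomial.aeval y W = 0 := by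
  obtain ⟨h, rfl⟩ := hdvd
  rw [map_mul, hy, zero_mul]

lemma exists_s1 (hexc : ¬ ∃ (a : F) (h : ℕ), A = Polynomial.C a * Polynomial.X ^ p ^ h) :
    ∃ s : ℕ, 1 ≤ s ∧ ∀ y : AlgebraicClosure F, Polynomial.aeval y A = 0 →
      y ^ Fintype.card F ^ s = y := by
  refine ⟨(A.natDegree).factorial, Nat.factorial_pos _, ?_⟩
  intro y hy
  have hyint : IsIntegral F y := (Algebra.IsAlgebraic.isAlgebraic y).isIntegral
  have hgirr := minpoly.irreducible hyint
  set g := minpoly F y with hg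
  have ht1 : 0 < g.natDegree := minpoly.natDegree_pos hyint
  have hdvd : g ∣ (Polynomial.X ^ (Fintype.card F ^ g.natDegree) - Polynomial.X) :=
    irreducible_dvd_X_pow_card hgirr
  have hyt : y ^ Fintype.card F ^ g.natDegree = y := by
    have := root_pow_card_of_dvd hdvd (minpoly.aeval F y)
    rw [map_sub, Polynomial.aeval_X_pow, Polynomial.aeval_X, sub_eq_zero] at this
    exact this
  have hle : g.natDegree ≤ A.natDegree :=
    Polynomial.natDegree_le_of_dvd (minpoly.dvd F y hy) (addpoly_ne_zero hexc)
  obtain ⟨c, hc⟩ := Nat.dvd_factorial ht1 hle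
  rw [hc]
  exact pow_card_fix_mul hyt c

end S1

section Count

variable {p : ℕ} [Fact p.Prime] {F : Type*} [Field F] [Fintype F] [CharP F p]
variable [DecidableEq F] [DecidableEq (AlgebraicClosure F)] [DecidableEq (Polynomial F)]
variable {A : Polynomial F} {b : F}

open UniqueFactorizationMonoid in
lemma eq_of_common_root_normalized {P g g' : Polynomial F}
    (hg : g ∈ UniqueFactorizationMonoid.normalizedFactors P)
    (hg' : g' ∈ UniqueFactorizationMonoid.normalizedFactors P)
    {y : AlgebraicClosure F} (h1 : Polynomial.aeval y g = 0)
    (h2 : Polynomial.aeval y g' = 0) : g = g' := by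
  have hi := irreducible_of_normalized_factor g hg
  have hi' := irreducible_of_normalized_factor g' hg'
  have hdvd : g ∣ g' := dvd_of_common_root hi h1 h2
  have hass : Associated g g' := hi.associated_of_dvd hi' hdvd
  rw [← normalize_normalized_factor g hg, ← normalize_normalized_factor g' hg',
    normalize_eq_normalize hass.dvd hass.symm.dvd]

open UniqueFactorizationMonoid in
/-- every monic irreducible factor of the n-th iterate has degree at most `s₁ * p ^ k`
whenever `n + 1 ≤ p ^ k`. -/
lemma factor_natDegree_le {e : ℕ} (hq : Fintype.card F = p ^ e)
    (hA : IsAdditivePoly p A)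
    (hexc : ¬ ∃ (a : F) (h : ℕ), A = Polynomial.C a * Polynomial.X ^ p ^ h)
    {s : ℕ} (hs1 : 1 ≤ s)
    (hs : ∀ y : AlgebraicClosure F, Polynomial.aeval y A = 0 → y ^ Fintype.card F ^ s = y)
    {n k : ℕ} (hk : n + 1 ≤ p ^ k) {g : Polynomial F}
    (hg : g ∈ UniqueFactorizationMonoid.normalizedFactors (polyIter (A + Polynomial.C b) n)) :
    g.natDegree ≤ s * p ^ k := by
  have hi := irreducible_of_normalized_factor g hg
  have hdvdP : g ∣ polyIter (A + Polynomial.C b) n := dvd_of_mem_normalizedFactors hg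
  -- find a root of g in the algebraic closure
  have hdeg : (g.map (algebraMap F (AlgebraicClosure F))).degree ≠ 0 := by
    have h1 : 0 < (g.map (algebraMap F (AlgebraicClosure F))).natDegree := by
      rw [Polynomial.natDegree_map_eq_of_injective (algebraMap F (AlgebraicClosure F)).injective]
      exact hi.natDegree_pos
    exact ne_of_gt (Polynomial.natDegree_pos_iff_degree_pos.mp h1)
  obtain ⟨y, hy⟩ := IsAlgClosed.exists_root _ hdeg
  have hyg : Polynomial.aeval y g = 0 := by
    rw [Polynomial.IsRoot.def, Polynomial.eval_map, ← Polynomial.aeval_def] at hy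
    exact hy
  have hyP : Polynomial.aeval y (polyIter (A + Polynomial.C b) n) = 0 :=
    root_pow_card_of_dvd hdvdP hyg
  have hiter := deltaF_iterate_root (b := b) hq hA hs n y hyP
  have hfix : y ^ Fintype.card F ^ (s * p ^ k) = y :=
    pow_fix_of_deltaF_iter hq hk hiter
  have hroot2 : Polynomial.aeval y
      (Polynomial.X ^ (Fintype.card F ^ (s * p ^ k)) - Polynomial.X : Polynomial F) = 0 := by
    rw [map_sub, Polynomial.aeval_X_pow, Polynomial.aeval_X, hfix, sub_self]
  have hdvd2 := dvd_of_common_root hi hyg hroot2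
  exact natDegree_le_of_dvd_X_pow_card hq hi (Nat.mul_pos hs1 (pow_pos (Nat.Prime.pos (Fact.out : p.Prime)) k)) hdvd2

lemma sq_le_two_pow : ∀ j : ℕ, 6 ≤ j → (j + 1) ^ 2 ≤ 2 ^ j := by
  intro j hj
  induction j, hj using Nat.le_induction with
  | base => norm_num
  | succ j hj ih =>
    have h2 : (j + 2) ^ 2 ≤ 2 * (j + 1) ^ 2 := by nlinarith
    calc (j + 1 + 1) ^ 2 ≤ 2 * (j + 1) ^ 2 := h2
      _ ≤ 2 * 2 ^ j := by omega
      _ = 2 ^ (j + 1) := by ring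

lemma growth_bound {C : ℕ} (hC : 1 ≤ C) {n : ℕ} (hn : 8 * C + 100 ≤ n) :
    (n + 1) ^ 2 * C ≤ 2 ^ (n / 2) := by
  have h1 : (n / 8 + 1) ^ 2 ≤ 2 ^ (n / 8) := sq_le_two_pow _ (by omega)
  have h2 : n + 1 ≤ 9 * (n / 8 + 1) := by omega
  have h3 : (n + 1) ^ 2 ≤ 81 * (n / 8 + 1) ^ 2 := by nlinarith
  have h4 : C ≤ 2 ^ (n / 8) := by
    calc C ≤ 2 ^ C := le_of_lt (Nat.lt_two_pow_self (n := C))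
      _ ≤ 2 ^ (n / 8) := Nat.pow_le_pow_right (by norm_num) (by omega)
  have h5 : (81 : ℕ) ≤ 2 ^ 7 := by norm_num
  calc (n + 1) ^ 2 * C ≤ (81 * 2 ^ (n / 8)) * 2 ^ (n / 8) :=
        Nat.mul_le_mul (h3.trans (Nat.mul_le_mul_left 81 h1)) h4
    _ ≤ (2 ^ 7 * 2 ^ (n / 8)) * 2 ^ (n / 8) := by
        exact Nat.mul_le_mul_right _ (Nat.mul_le_mul_right _ h5)
    _ = 2 ^ (7 + n / 8 + n / 8) := by rw [pow_add, pow_add]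
    _ ≤ 2 ^ (n / 2) := Nat.pow_le_pow_right (by norm_num) (by omega)

end Count

section Lower

variable {p : ℕ} [Fact p.Prime] {F : Type*} [Field F] [Fintype F] [CharP F p]
variable [DecidableEq F] [DecidableEq (AlgebraicClosure F)] [DecidableEq (Polynomial F)]
variable {A : Polynomial F} {b : F}

open UniqueFactorizationMonoid in
lemma sum_natDegree_eq (hA : IsAdditivePoly p A)
    (hexc : ¬ ∃ (a : F) (h : ℕ), A = Polynomial.C a * Polynomial.X ^ p ^ h) (n : ℕ) :
    ∑ g ∈ (normalizedFactors (polyIter (A + Polynomial.C b) n)).toFinset, g.natDegree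
      = (rootsK A).card ^ n := by
  rw [sum_natDegree_normalizedFactors _ (polyIter_B_ne_zero hA hexc n)]
  exact card_rootsK_polyIter hA hexc n

open UniqueFactorizationMonoid in
lemma lower_count {e : ℕ} (hq : Fintype.card F = p ^ e) (hA : IsAdditivePoly p A)
    (hexc : ¬ ∃ (a : F) (h : ℕ), A = Polynomial.C a * Polynomial.X ^ p ^ h)
    {n : ℕ} (hn : 8 * Fintype.card F + 200 ≤ n) :
    (normalizedFactors (polyIter (A + Polynomial.C b) n)).toFinset.card * (n / (4 * e) + 1)
      ≤ 2 * (rootsK A).card ^ n := by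
  have hp2 : 2 ≤ p := (Fact.out : p.Prime).two_le
  have hq2 : 1 < Fintype.card F := Fintype.one_lt_card
  have hrp : p ≤ (rootsK A).card := card_le_card_rootsK hA hexc
  set D := n / (4 * e) + 1 with hD
  set r := (rootsK A).card with hr
  set Mn := (normalizedFactors (polyIter (A + Polynomial.C b) n)).toFinset with hMn
  have hsum : ∑ g ∈ Mn, g.natDegree = r ^ n := sum_natDegree_eq hA hexc n
  -- the key numeric inequality
  have hDq : D ^ 2 * Fintype.card F ^ D ≤ r ^ n := by
    have h1 : Fintype.card F ^ D ≤ p ^ (n / 4) * Fintype.card F := by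
      rw [hq, ← pow_mul]
      have he2 : e * D ≤ n / 4 + e := by
        have h0 : e * (n / (4 * e)) ≤ n / 4 := by
          rw [show n / (4 * e) = n / 4 / e from (Nat.div_div_eq_div_mul n 4 e).symm]
          exact Nat.mul_div_le (n / 4) e
        calc e * D = e * (n / (4 * e)) + e := by rw [hD]; ring
          _ ≤ n / 4 + e := by omega
      calc p ^ (e * D) ≤ p ^ (n / 4 + e) := Nat.pow_le_pow_right (by omega) he2
        _ = p ^ (n / 4) * p ^ e := pow_add p _ _
    have h2 : (n + 1) ^ 2 * Fintype.card F ≤ 2 ^ (n / 2) :=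
      growth_bound (by omega) (by omega)
    have h3 : D ^ 2 ≤ (n + 1) ^ 2 := by
      have : D ≤ n + 1 := by
        have := Nat.div_le_self n (4 * e)
        omega
      exact Nat.pow_le_pow_left this 2
    calc D ^ 2 * Fintype.card F ^ D ≤ (n + 1) ^ 2 * (p ^ (n / 4) * Fintype.card F) :=
          Nat.mul_le_mul h3 h1
      _ = ((n + 1) ^ 2 * Fintype.card F) * p ^ (n / 4) := by ring
      _ ≤ 2 ^ (n / 2) * p ^ (n / 4) := Nat.mul_le_mul_right _ h2
      _ ≤ p ^ (n - n / 4) * p ^ (n / 4) := by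
          refine Nat.mul_le_mul_right _ ?_
          calc (2 : ℕ) ^ (n / 2) ≤ p ^ (n / 2) := Nat.pow_le_pow_left hp2 _
            _ ≤ p ^ (n - n / 4) := Nat.pow_le_pow_right (by omega) (by omega)
      _ = p ^ n := by rw [← pow_add]; congr 1; omega
      _ ≤ r ^ n := Nat.pow_le_pow_left hrp n
  -- number of factors of large degree
  have hbig : (Mn.filter (fun g => ¬ g.natDegree ≤ D)).card * D ≤ r ^ n := by
    calc (Mn.filter (fun g => ¬ g.natDegree ≤ D)).card * D
        = ∑ _g ∈ Mn.filter (fun g => ¬ g.natDegree ≤ D), D := by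
          rw [Finset.sum_const, smul_eq_mul]
      _ ≤ ∑ g ∈ Mn.filter (fun g => ¬ g.natDegree ≤ D), g.natDegree :=
          Finset.sum_le_sum (fun g hg =>
            le_of_lt (not_le.mp (Finset.mem_filter.mp hg).2))
      _ ≤ ∑ g ∈ Mn, g.natDegree :=
          Finset.sum_le_sum_of_subset (Finset.filter_subset _ _)
      _ = r ^ n := hsum
  -- number of factors of small degree
  have hsmall : (Mn.filter (fun g => g.natDegree ≤ D)).card ≤ D * Fintype.card F ^ D := by
    set Y := (Finset.Icc 1 D).biUnion
      (fun j => rootsK (Polynomial.X ^ (Fintype.card F ^ j) - Polynomial.X : Polynomial F))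
      with hY
    have hroot : ∀ g ∈ Mn, ∃ y : AlgebraicClosure F, Polynomial.aeval y g = 0 := by
      intro g hg
      have hi := irreducible_of_normalized_factor g (Multiset.mem_toFinset.mp hg)
      have hdeg : (g.map (algebraMap F (AlgebraicClosure F))).degree ≠ 0 := by
        have h1 : 0 < (g.map (algebraMap F (AlgebraicClosure F))).natDegree := by
          rw [Polynomial.natDegree_map_eq_of_injective
            (algebraMap F (AlgebraicClosure F)).injective]
          exact hi.natDegree_pos
        exact ne_of_gt (Polynomial.natDegree_pos_iff_degree_pos.mp h1)
      obtain ⟨y, hy⟩ := IsAlgClosed.exists_root _ hdeg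
      refine ⟨y, ?_⟩
      rw [Polynomial.IsRoot.def, Polynomial.eval_map, ← Polynomial.aeval_def] at hy
      exact hy
    classical
    set f : Polynomial F → AlgebraicClosure F :=
      fun g => if hg : ∃ y : AlgebraicClosure F, Polynomial.aeval y g = 0
        then hg.choose else 0 with hf
    have hfroot : ∀ g ∈ Mn, Polynomial.aeval (f g) g = 0 := by
      intro g hg
      have hex := hroot g hg
      rw [hf]
      simp only [dif_pos hex]
      exact hex.choose_spec
    have hcardle : (Mn.filter (fun g => g.natDegree ≤ D)).card ≤ Y.card := by
      apply Finset.card_le_card_of_injOn f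
      · intro g hgf
        have hgMn := (Finset.mem_filter.mp hgf).1
        have hgD := (Finset.mem_filter.mp hgf).2
        have hi := irreducible_of_normalized_factor g (Multiset.mem_toFinset.mp hgMn)
        have hpos := hi.natDegree_pos
        rw [hY, Finset.mem_coe, Finset.mem_biUnion]
        refine ⟨g.natDegree, Finset.mem_Icc.mpr ⟨hpos, hgD⟩, ?_⟩
        have hne : (Polynomial.X ^ (Fintype.card F ^ g.natDegree) - Polynomial.X :
            Polynomial F) ≠ 0 :=
          FiniteField.X_pow_card_pow_sub_X_ne_zero _ (by omega) hq2
        rw [mem_rootsK hne]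
        exact root_pow_card_of_dvd (irreducible_dvd_X_pow_card hi) (hfroot g hgMn)
      · intro g hgf g' hgf' heq
        have hgMn := (Finset.mem_filter.mp (Finset.mem_coe.mp hgf)).1
        have hgMn' := (Finset.mem_filter.mp (Finset.mem_coe.mp hgf')).1
        exact eq_of_common_root_normalized (Multiset.mem_toFinset.mp hgMn)
          (Multiset.mem_toFinset.mp hgMn') (hfroot g hgMn) (heq ▸ hfroot g' hgMn')
    have hYcard : Y.card ≤ D * Fintype.card F ^ D := by
      calc Y.card ≤ ∑ j ∈ Finset.Icc 1 D,
          (rootsK (Polynomial.X ^ (Fintype.card F ^ j) - Polynomial.X :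
            Polynomial F)).card := Finset.card_biUnion_le
        _ ≤ ∑ _j ∈ Finset.Icc 1 D, Fintype.card F ^ D := by
            refine Finset.sum_le_sum ?_
            intro j hj
            obtain ⟨hj1, hjD⟩ := Finset.mem_Icc.mp hj
            calc (rootsK (Polynomial.X ^ (Fintype.card F ^ j) - Polynomial.X :
                Polynomial F)).card
                ≤ Multiset.card ((Polynomial.X ^ (Fintype.card F ^ j) - Polynomial.X :
                    Polynomial F).map (algebraMap F (AlgebraicClosure F))).roots :=
                  Multiset.toFinset_card_le _
              _ ≤ ((Polynomial.X ^ (Fintype.card F ^ j) - Polynomial.X :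
                    Polynomial F).map (algebraMap F (AlgebraicClosure F))).natDegree :=
                  Polynomial.card_roots' _
              _ ≤ Fintype.card F ^ j := by
                  rw [Polynomial.natDegree_map_eq_of_injective
                    (algebraMap F (AlgebraicClosure F)).injective]
                  refine le_trans (Polynomial.natDegree_sub_le _ _) ?_
                  simp only [Polynomial.natDegree_X_pow, Polynomial.natDegree_X, max_le_iff]
                  exact ⟨le_refl _, Nat.one_le_pow _ _ (by omega)⟩
              _ ≤ Fintype.card F ^ D := Nat.pow_le_pow_right (by omega) hjD
        _ = D * Fintype.card F ^ D := by
            rw [Finset.sum_const, Nat.card_Icc, smul_eq_mul, Nat.add_sub_cancel]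
    exact le_trans hcardle hYcard
  -- combine
  have hsplitc : (Mn.filter (fun g => g.natDegree ≤ D)).card
      + (Mn.filter (fun g => ¬ g.natDegree ≤ D)).card = Mn.card :=
    Finset.card_filter_add_card_filter_not (p := fun g : Polynomial F => g.natDegree ≤ D)
  calc Mn.card * D = (Mn.filter (fun g => g.natDegree ≤ D)).card * D
        + (Mn.filter (fun g => ¬ g.natDegree ≤ D)).card * D := by
        rw [← hsplitc]; ring
    _ ≤ (D * Fintype.card F ^ D) * D + r ^ n := by
        exact Nat.add_le_add (Nat.mul_le_mul_right _ hsmall) hbig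
    _ = D ^ 2 * Fintype.card F ^ D + r ^ n := by ring
    _ ≤ r ^ n + r ^ n := by omega
    _ = 2 * r ^ n := by ring

end Lower

theorem avgFactorDeg_linear_growth (p : ℕ) [Fact p.Prime] (F : Type*) [Field F] [Fintype F]
    [CharP F p] (A : Polynomial F) (hA : IsAdditivePoly p A)
    (hexc : ¬ ∃ (a : F) (h : ℕ), A = Polynomial.C a * Polynomial.X ^ p ^ h) (b : F) :
    ∃ α β : ℝ, 0 < α ∧ 0 < β ∧ ∀ n : ℕ, 1 ≤ n →
      α ≤ avgFactorDeg (polyIter (A + Polynomial.C b) n) / n ∧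
        avgFactorDeg (polyIter (A + Polynomial.C b) n) / n ≤ β := by
  letI : DecidableEq F := Classical.decEq F
  letI : DecidableEq (Polynomial F) := Classical.decEq (Polynomial F)
  letI : DecidableEq (AlgebraicClosure F) := Classical.decEq (AlgebraicClosure F)
  obtain ⟨e', hp', hq⟩ := FiniteField.card F p
  have he1 : 1 ≤ (e' : ℕ) := e'.2
  obtain ⟨s, hs1, hs⟩ := exists_s1 (p := p) hexc
  have hp2 : 2 ≤ p := (Fact.out : p.Prime).two_le
  have hq2 : 1 < Fintype.card F := Fintype.one_lt_card
  have hrp : p ≤ (rootsK A).card := card_le_card_rootsK hA hexc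
  set e : ℕ := (e' : ℕ) with hee
  set r : ℕ := (rootsK A).card with hrr
  set n₀ : ℕ := 8 * Fintype.card F + 200 with hn₀def
  have hepos : (0:ℝ) < (e:ℝ) := by exact_mod_cast he1
  have hn₀pos : (0:ℝ) < (n₀:ℝ) := by positivity
  have hα1 : (0:ℝ) < 1 / (8 * (e:ℝ)) := by positivity
  have hβpos : (0:ℝ) < (s:ℝ) * p := by
    have : (0:ℝ) < (s:ℝ) := by exact_mod_cast hs1
    have hp0 : (0:ℝ) < (p:ℝ) := by exact_mod_cast (by omega : 0 < p)
    positivity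
  refine ⟨min (1 / (8 * (e:ℝ))) (1 / (n₀:ℝ)), (s : ℝ) * p,
    lt_min hα1 (by positivity), hβpos, ?_⟩
  intro n hn1
  have hP0 : polyIter (A + Polynomial.C b) n ≠ 0 := polyIter_B_ne_zero hA hexc n
  set Mn := (UniqueFactorizationMonoid.normalizedFactors
    (polyIter (A + Polynomial.C b) n)).toFinset with hMn
  have hsum : ∑ g ∈ Mn, g.natDegree = r ^ n := sum_natDegree_eq hA hexc n
  have hr2 : 2 ≤ r := le_trans hp2 hrp
  have hNpos : 0 < Mn.card := by
    rcases Finset.eq_empty_or_nonempty Mn with h | h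
    · rw [h, Finset.sum_empty] at hsum
      exact absurd hsum.symm (pow_ne_zero _ (by omega))
    · exact Finset.card_pos.mpr h
  have havg : avgFactorDeg (polyIter (A + Polynomial.C b) n)
      = ((r ^ n : ℕ) : ℝ) / (Mn.card : ℝ) := by
    simp only [avgFactorDeg]
    rw [show ∑ g ∈ Mn, ((g.natDegree : ℝ)) = ((∑ g ∈ Mn, g.natDegree : ℕ) : ℝ) from
      (Nat.cast_sum _ _).symm, hsum]
  rw [havg]
  have hNcast : (0:ℝ) < (Mn.card : ℝ) := by exact_mod_cast hNpos
  have hncast : (0:ℝ) < (n:ℝ) := by exact_mod_cast hn1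
  constructor
  · -- lower bound
    rcases le_or_gt n₀ n with hcase | hcase
    · have hcount := lower_count (b := b) hq hA hexc (n := n) hcase
      set D := n / (4 * e) + 1 with hD
      have hkey : (Mn.card : ℝ) * (D:ℝ) ≤ 2 * ((r:ℝ))^n := by exact_mod_cast hcount
      have hnD : (n:ℝ) < 4 * (e:ℝ) * (D:ℝ) := by
        have h1 := Nat.div_add_mod n (4 * e)
        have h2 : n % (4*e) < 4*e := Nat.mod_lt _ (by omega)
        have h3 : n < 4*e*D := by
          have h4 : 4*e*D = 4*e*(n/(4*e)) + 4*e := by rw [hD]; ring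
          omega
        exact_mod_cast h3
      have h4 : (D:ℝ)/2 ≤ ((r^n : ℕ):ℝ)/(Mn.card : ℝ) := by
        rw [div_le_div_iff₀ (by norm_num) hNcast]
        push_cast
        push_cast at hkey
        linarith [hkey]
      refine le_trans (min_le_left _ _) ?_
      rw [le_div_iff₀ hncast]
      have h5 : 1/(8*(e:ℝ)) * n ≤ (D:ℝ)/2 := by
        rw [div_mul_eq_mul_div, div_le_div_iff₀ (by positivity) (by norm_num)]
        linarith [hnD]
      exact le_trans h5 h4
    · have hone : (1:ℝ) ≤ ((r^n : ℕ):ℝ)/(Mn.card : ℝ) := by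
        rw [le_div_iff₀ hNcast, one_mul]
        have hcard_le : Mn.card ≤ r ^ n := by
          rw [← hsum]
          calc Mn.card = ∑ _g ∈ Mn, 1 := by rw [Finset.sum_const, smul_eq_mul, mul_one]
            _ ≤ ∑ g ∈ Mn, g.natDegree := Finset.sum_le_sum fun g hg =>
                (UniqueFactorizationMonoid.irreducible_of_normalized_factor g
                  (Multiset.mem_toFinset.mp hg)).natDegree_pos
        exact_mod_cast hcard_le
      refine le_trans (min_le_right _ _) ?_
      rw [le_div_iff₀ hncast]
      have h6 : 1/(n₀:ℝ) * n ≤ 1 := by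
        rw [div_mul_eq_mul_div, one_mul, div_le_one hn₀pos]
        exact_mod_cast le_of_lt hcase
      exact le_trans h6 hone
  · -- upper bound
    have hkex : ∃ k, n + 1 ≤ p ^ k :=
      ⟨n + 1, le_trans (le_of_lt (Nat.lt_two_pow_self (n := n+1))) (Nat.pow_le_pow_left hp2 _)⟩
    set k := Nat.find hkex with hk
    have hkspec : n + 1 ≤ p ^ k := Nat.find_spec hkex
    have hk1 : 1 ≤ k := by
      rcases Nat.eq_zero_or_pos k with h0 | h
      · rw [h0, pow_zero] at hkspec; omega
      · exact h
    have hkmin : ¬ (n + 1 ≤ p ^ (k - 1)) := Nat.find_min hkex (by omega)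
    have hpk : p ^ k ≤ p * n := by
      have h1 : p ^ k = p * p ^ (k - 1) := by
        rw [← pow_succ']
        congr 1
        omega
      have h2 : p ^ (k-1) ≤ n := by omega
      rw [h1]
      exact Nat.mul_le_mul_left p h2
    have hdegs : ∀ g ∈ Mn, g.natDegree ≤ s * (p * n) := by
      intro g hg
      refine le_trans (factor_natDegree_le hq hA hexc hs1 hs hkspec
        (Multiset.mem_toFinset.mp hg)) ?_
      exact Nat.mul_le_mul_left s hpk
    have hsumle : r ^ n ≤ Mn.card * (s * (p * n)) := by
      rw [← hsum]
      have := Finset.sum_le_card_nsmul Mn (fun g => g.natDegree) (s * (p * n)) hdegs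
      rwa [smul_eq_mul] at this
    rw [div_le_iff₀ hncast, div_le_iff₀ hNcast]
    calc ((r^n : ℕ):ℝ) ≤ (Mn.card : ℝ) * ((s:ℝ) * ((p:ℝ) * n)) := by exact_mod_cast hsumle
      _ = (s:ℝ) * p * n * Mn.card := by ring
end
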